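/- arXiv:2410.20240 — 7 statements merged into one kernel-verified Lean document; each statement's English description precedes it below -/
import Mathlib

section
/- In the MPMRF construction, every component has a Poisson distribution with mean λ: if T=(V,E) is a tree on d vertices rooted at r, λ>0, α=(α_e)_{e∈E}∈(0,1)^{d−1}, and N=(N_v)_{v∈V}∼MPMRF(λ,α,T), then for every v∈V the random variable N_v has the Poisson distribution with parameter λ. -/
open MeasureTheory ProbabilityTheory
open scoped ENNReal Classical

noncomputable section

/-- `X` has the Poisson distribution with (real) parameter `r`. -/
def IsPoissonRV {Ω : Type*} [MeasureSpace Ω] (X : Ω → ℕ) (r : ℝ) : Prop :=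
  Measurable X ∧ ∀ k : ℕ,
    (ℙ : Measure Ω) {ω | X ω = k} = ENNReal.ofReal (Real.exp (-r) * r ^ k / (Nat.factorial k))

/-- `X` is a Bernoulli random variable with success probability `p`. -/
def IsBernoulliRV {Ω : Type*} [MeasureSpace Ω] (X : Ω → Bool) (p : ℝ) : Prop :=
  Measurable X ∧ (ℙ : Measure Ω) {ω | X ω = true} = ENNReal.ofReal p

/-- `pa` is the parent map of the tree `G` rooted at `r`. -/
def IsParentMap {V : Type*} (G : SimpleGraph V) (r : V) (pa : V → V) : Prop :=
  pa r = r ∧ (∀ v, v ≠ r → G.Adj (pa v) v) ∧ ∀ v, ∃ n : ℕ, pa^[n] v = r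

/-- `N` is an MPMRF vector built (via binomial thinning of the parent value plus an
independent Poisson innovation) along the tree with parent map `pa` rooted at `r`. -/
def IsMPMRF {V Ω : Type*} [Fintype V] [DecidableEq V] [MeasureSpace Ω]
    (lam : ℝ) (α : V → V → ℝ) (pa : V → V) (r : V) (N : V → Ω → ℕ) : Prop :=
  ∃ (L : V → Ω → ℕ) (I : V → ℕ → Ω → Bool),
    iIndepFun
      (Sum.elim L (fun (p : V × ℕ) (ω : Ω) => (if I p.1 p.2 ω then 1 else 0 : ℕ))) ℙ ∧
    IsPoissonRV (L r) lam ∧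
    (∀ v, v ≠ r → IsPoissonRV (L v) (lam * (1 - α (pa v) v))) ∧
    (∀ v i, IsBernoulliRV (I v i) (α (pa v) v)) ∧
    (∀ ω, N r ω = L r ω) ∧
    ∀ v, v ≠ r → ∀ ω, N v ω = L v ω + ∑ i ∈ Finset.range (N (pa v) ω), (if I v i ω then 1 else 0)

/-- supermodular function on ℝ². -/
def Supermodular (ζ : ℝ × ℝ → ℝ) : Prop :=
  ∀ x y : ℝ × ℝ, ζ x + ζ y ≤ ζ (x ⊓ y) + ζ (x ⊔ y)

/-- supermodular order for bivariate random vectors. -/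
def SupermodularLE {Ω Ω' : Type*} [MeasureSpace Ω] [MeasureSpace Ω']
    (X : Ω → ℝ × ℝ) (Y : Ω' → ℝ × ℝ) : Prop :=
  ∀ ζ : ℝ × ℝ → ℝ, Supermodular ζ →
    Integrable (fun ω => ζ (X ω)) ℙ → Integrable (fun ω => ζ (Y ω)) ℙ →
    ∫ ω, ζ (X ω) ∂ℙ ≤ ∫ ω, ζ (Y ω) ∂ℙ

/-- usual stochastic order for ℕ-valued random variables. -/
def StochLE {Ω Ω' : Type*} [MeasureSpace Ω] [MeasureSpace Ω']
    (X : Ω → ℕ) (Y : Ω' → ℕ) : Prop :=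
  ∀ k : ℕ, (ℙ : Measure Ω) {ω | k < X ω} ≤ (ℙ : Measure Ω') {ω | k < Y ω}

/-- convex order for real random variables. -/
def ConvexLE {Ω Ω' : Type*} [MeasureSpace Ω] [MeasureSpace Ω']
    (X : Ω → ℝ) (Y : Ω' → ℝ) : Prop :=
  ∀ φ : ℝ → ℝ, ConvexOn ℝ Set.univ φ →
    Integrable (fun ω => φ (X ω)) ℙ → Integrable (fun ω => φ (Y ω)) ℙ →
    ∫ ω, φ (X ω) ∂ℙ ≤ ∫ ω, φ (Y ω) ∂ℙ

/-- the recursive family of pgf's `η_v^{T_r}` associated with the rooted tree with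
parent map `pa` and edge parameters `α`. -/
def IsEta {V : Type*} [Fintype V] (α : V → V → ℝ) (pa : V → V) (η : V → ℝ → ℝ) : Prop :=
  ∀ v t, η v t = t * ∏ j ∈ Finset.univ.filter (fun j => pa j = v ∧ j ≠ v),
    (1 - α v j + α v j * η j t)

/-- `g` is the probability generating function of `X` (on `[-1,1]`). -/
def HasPGF {Ω : Type*} [MeasureSpace Ω] (X : Ω → ℕ) (g : ℝ → ℝ) : Prop :=
  ∀ t ∈ Set.Icc (-1 : ℝ) 1, ∫ ω, t ^ X ω ∂ℙ = g t


/-!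
Induct down the tree from the root. For `v ≠ r`, the value `N (pa v)` is a function of the
innovations `L w`, `I w ·` at the ancestors `w` of `pa v`, and `v` is not among them, so
`N (pa v)`, `L v` and the Bernoulli sequence `I v ·` are independent. Given `N (pa v) = m`, the
thinning of `N (pa v)` is `Binomial(m, α)`, and mixing binomials over `m ~ Poisson(λ)` gives
`Poisson(λα)`; adding the independent `L v ~ Poisson(λ(1 - α))` gives `Poisson(λ)`.
-/

open Function

section Thinning

variable {Ω : Type*}

def binomialThinning (B : ℕ → Ω → Bool) (X : Ω → ℕ) (ω : Ω) : ℕ :=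
  ∑ i ∈ Finset.range (X ω), if B i ω then 1 else 0

theorem decide_eq_one_comp_ite (b : Ω → Bool) :
    (fun n : ℕ => decide (n = 1)) ∘ (fun ω => if b ω then 1 else 0) = b := by
  ext ω; cases h : b ω <;> simp [h]

theorem binomialThinning_const_succ (B : ℕ → Ω → Bool) (m : ℕ) :
    binomialThinning B (fun _ => m + 1) =
      fun ω => binomialThinning B (fun _ => m) ω + if B m ω then 1 else 0 := by
  ext ω; exact Finset.sum_range_succ _ m

theorem measurable_binomialThinning {m : MeasurableSpace Ω} {B : ℕ → Ω → Bool} {X : Ω → ℕ}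
    (hB : ∀ i, Measurable[m] (B i)) (hX : Measurable[m] X) :
    Measurable[m] (binomialThinning B X) := by
  have hconst : ∀ n, Measurable[m] (binomialThinning B (fun _ => n)) := fun n =>
    Finset.measurable_sum _ fun i _ => Measurable.ite (hB i (measurableSet_singleton true))
      measurable_const measurable_const
  exact (measurable_from_prod_countable_left (f := fun p : Ω × ℕ =>
    binomialThinning B (fun _ => p.2) p.1) hconst).comp (measurable_id.prodMk hX)

end Thinning

section Binomial

variable {Ω : Type*} [MeasureSpace Ω] [IsProbabilityMeasure (ℙ : Measure Ω)]

theorem IsBernoulliRV.measure_false {b : Ω → Bool} {p : ℝ} (hb : IsBernoulliRV b p)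
    (hp : 0 ≤ p) : (ℙ : Measure Ω) {ω | b ω = false} = ENNReal.ofReal (1 - p) := by
  have hcompl : {ω | b ω = false} = (b ⁻¹' {true})ᶜ := by ext ω; simp
  rw [hcompl, prob_compl_eq_one_sub (hb.1 (measurableSet_singleton true)),
    ENNReal.ofReal_sub 1 hp, ENNReal.ofReal_one, ← hb.2]
  rfl

theorem measure_add_bernoulli_eq {X : Ω → ℕ} {b : Ω → Bool} {p : ℝ} (hp : 0 ≤ p)
    (hX : Measurable X) (hb : IsBernoulliRV b p) (hXb : IndepFun X b ℙ) (s : ℕ) :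
    (ℙ : Measure Ω) {ω | X ω + (if b ω then 1 else 0) = s} =
      ℙ {ω | X ω = s} * ENNReal.ofReal (1 - p) + ℙ {ω | X ω + 1 = s} * ENNReal.ofReal p := by
  have hsplit : {ω | X ω + (if b ω then 1 else 0) = s} =
      (X ⁻¹' {s} ∩ b ⁻¹' {false}) ∪ ((X · + 1) ⁻¹' {s} ∩ b ⁻¹' {true}) := by
    ext ω; cases h : b ω <;> simp [h]
  have hXb' : IndepFun (X · + 1) b ℙ := hXb.comp (measurable_add_const 1) measurable_id
  rw [hsplit, measure_union, hXb.measure_inter_preimage_eq_mul _ _ (measurableSet_singleton _)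
      (measurableSet_singleton _), hXb'.measure_inter_preimage_eq_mul _ _
      (measurableSet_singleton _) (measurableSet_singleton _)]
  · rw [← hb.measure_false hp, ← hb.2]; rfl
  · exact Set.disjoint_left.2 fun ω h h' => by simp_all
  · exact ((measurable_add_const 1).comp hX (measurableSet_singleton s)).inter
      (hb.1 (measurableSet_singleton true))

theorem choose_mul_pow_add_choose_mul_pow (m t : ℕ) (p q : ℝ) :
    m.choose (t + 1) * p ^ (t + 1) * q ^ (m - (t + 1)) * q + m.choose t * p ^ t * q ^ (m - t) * p
      = (m + 1).choose (t + 1) * p ^ (t + 1) * q ^ (m + 1 - (t + 1)) := by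
  rw [Nat.add_sub_add_right, Nat.choose_succ_succ, Nat.cast_add]
  by_cases h : t + 1 ≤ m
  · rw [show m - t = m - (t + 1) + 1 by omega]; ring
  · rw [Nat.choose_eq_zero_of_lt (by omega)]; ring

theorem measure_binomialThinning_const_eq {B : ℕ → Ω → Bool} {p : ℝ} (hp0 : 0 ≤ p)
    (hp1 : p ≤ 1) (hB : iIndepFun B ℙ) (hBer : ∀ i, IsBernoulliRV (B i) p) (m s : ℕ) :
    (ℙ : Measure Ω) {ω | binomialThinning B (fun _ => m) ω = s} =
      ENNReal.ofReal (m.choose s * p ^ s * (1 - p) ^ (m - s)) := by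
  have hq : 0 ≤ 1 - p := by linarith
  induction m generalizing s with
  | zero =>
    rcases s with _ | s <;> simp [binomialThinning]
  | succ m ih =>
    have hind : IndepFun (binomialThinning B (fun _ => m)) (B m) ℙ := by
      have hY := hB.comp (fun _ b => if b then 1 else 0) fun _ => measurable_from_top
      have := (hY.indepFun_finsetSum_of_notMem (fun i => measurable_from_top.comp (hBer i).1)
        (Finset.notMem_range_self (n := m))).comp measurable_id
        (measurable_from_top (f := fun n : ℕ => decide (n = 1)))
      convert this using 1
      · ext ω; simp [binomialThinning, Finset.sum_apply]
      · exact (decide_eq_one_comp_ite (B m)).symm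
    rw [binomialThinning_const_succ, measure_add_bernoulli_eq hp0
      (measurable_binomialThinning (fun i => (hBer i).1) measurable_const) (hBer m) hind]
    rcases s with _ | t
    · simp only [Nat.add_eq_zero_iff, one_ne_zero, and_false, Set.ofPred_false, measure_empty,
        zero_mul, add_zero, ih]
      rw [← ENNReal.ofReal_mul (by positivity)]
      simp [pow_succ]
    · simp only [Nat.add_right_cancel_iff, ih, ← choose_mul_pow_add_choose_mul_pow]
      rw [← ENNReal.ofReal_mul (by positivity), ← ENNReal.ofReal_mul (by positivity),
        ← ENNReal.ofReal_add (by positivity) (by positivity)]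

end Binomial

theorem ENNReal.tsum_ofReal_pow_div_factorial {x : ℝ} (hx : 0 ≤ x) :
    ∑' n : ℕ, ENNReal.ofReal (x ^ n / n.factorial) = ENNReal.ofReal (Real.exp x) := by
  rw [← ENNReal.ofReal_tsum_of_nonneg (fun n => by positivity) (Real.summable_pow_div_factorial x),
    Real.exp_eq_exp_ℝ, NormedSpace.exp_eq_tsum_div]

theorem tsum_ofReal_poisson_mul_binomial {lam p : ℝ} (hlam : 0 ≤ lam) (hp0 : 0 ≤ p)
    (hp1 : p ≤ 1) (s : ℕ) :
    ∑' m : ℕ, ENNReal.ofReal (Real.exp (-lam) * lam ^ m / m.factorial) *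
        ENNReal.ofReal (m.choose s * p ^ s * (1 - p) ^ (m - s)) =
      ENNReal.ofReal (Real.exp (-(lam * p)) * (lam * p) ^ s / s.factorial) := by
  have hq : 0 ≤ 1 - p := by linarith
  have hterm : ∀ t : ℕ,
      ENNReal.ofReal (Real.exp (-lam) * lam ^ (s + t) / (s + t).factorial) *
        ENNReal.ofReal ((s + t).choose s * p ^ s * (1 - p) ^ (s + t - s)) =
      ENNReal.ofReal (Real.exp (-lam) * (lam * p) ^ s / s.factorial) *
        ENNReal.ofReal ((lam * (1 - p)) ^ t / t.factorial) := by
    intro t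
    have hfac : ((s + t).choose s : ℝ) * s.factorial * t.factorial = (s + t).factorial := by
      have h := Nat.choose_mul_factorial_mul_factorial (Nat.le_add_right s t)
      rw [Nat.add_sub_cancel_left] at h
      exact_mod_cast h
    have hchoose : ((s + t).choose s : ℝ) ≠ 0 :=
      Nat.cast_ne_zero.2 (Nat.choose_pos (Nat.le_add_right s t)).ne'
    rw [← ENNReal.ofReal_mul (by positivity), ← ENNReal.ofReal_mul (by positivity),
      Nat.add_sub_cancel_left, ← hfac]
    congr 1
    rw [mul_pow, mul_pow, pow_add]
    field_simp
  have hsupp : Function.support (fun m : ℕ =>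
      ENNReal.ofReal (Real.exp (-lam) * lam ^ m / m.factorial) *
        ENNReal.ofReal (m.choose s * p ^ s * (1 - p) ^ (m - s))) ⊆ Set.range (s + ·) := by
    intro m hm
    have hsm : s ≤ m := by
      by_contra h
      simp [Nat.choose_eq_zero_of_lt (not_le.1 h)] at hm
    exact ⟨m - s, Nat.add_sub_cancel' hsm⟩
  rw [← (add_right_injective s).tsum_eq hsupp, tsum_congr hterm, ENNReal.tsum_mul_left,
    ENNReal.tsum_ofReal_pow_div_factorial (by positivity), ← ENNReal.ofReal_mul (by positivity),
    show -(lam * p) = -lam + lam * (1 - p) by ring, Real.exp_add]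
  congr 1
  ring

section PoissonRV

variable {Ω : Type*} [MeasureSpace Ω]

theorem isPoissonRV_iff_hasLaw {X : Ω → ℕ} (hX : Measurable X) {r : ℝ} (hr : 0 ≤ r) :
    IsPoissonRV X r ↔ HasLaw X (poissonMeasure r.toNNReal) ℙ := by
  have hPo : ∀ k : ℕ, poissonMeasure r.toNNReal {k} =
      ENNReal.ofReal (Real.exp (-r) * r ^ k / k.factorial) := by
    intro k; rw [poissonMeasure_singleton, Real.coe_toNNReal r hr]
  constructor
  · intro h
    refine ⟨hX.aemeasurable, Measure.ext_of_singleton fun k => ?_⟩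
    rw [Measure.map_apply hX (measurableSet_singleton k), hPo]
    exact h.2 k
  · intro h
    refine ⟨hX, fun k => ?_⟩
    rw [← hPo, ← h.map_eq, Measure.map_apply hX (measurableSet_singleton k)]
    rfl

theorem IsPoissonRV.add {X Y : Ω → ℕ} {a b : ℝ} (hX : IsPoissonRV X a) (hY : IsPoissonRV Y b)
    (ha : 0 ≤ a) (hb : 0 ≤ b) (hXY : IndepFun X Y ℙ) : IsPoissonRV (X + Y) (a + b) := by
  rw [isPoissonRV_iff_hasLaw (hX.1.add hY.1) (add_nonneg ha hb), Real.toNNReal_add ha hb]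
  exact hXY.hasLaw_add_poissonMeasure ((isPoissonRV_iff_hasLaw hX.1 ha).1 hX)
    ((isPoissonRV_iff_hasLaw hY.1 hb).1 hY)

theorem isPoissonRV_binomialThinning [IsProbabilityMeasure (ℙ : Measure Ω)] {A : Ω → ℕ}
    {B : ℕ → Ω → Bool} {lam p : ℝ} (hA : IsPoissonRV A lam) (hlam : 0 ≤ lam) (hp0 : 0 ≤ p)
    (hp1 : p ≤ 1) (hB : iIndepFun B ℙ) (hBer : ∀ i, IsBernoulliRV (B i) p)
    (hAB : IndepFun A (fun ω i => B i ω) ℙ) :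
    IsPoissonRV (binomialThinning B A) (lam * p) := by
  refine ⟨measurable_binomialThinning (fun i => (hBer i).1) hA.1, fun s => ?_⟩
  set fiber : ℕ → Set Ω := fun m => A ⁻¹' {m} ∩ binomialThinning B (fun _ => m) ⁻¹' {s}
  have hfibers : {ω | binomialThinning B A ω = s} = ⋃ m, fiber m := by
    ext ω; simp [fiber, binomialThinning]
  have hdisj : Pairwise (Disjoint on fiber) := fun m n hmn =>
    ((Set.disjoint_singleton.2 hmn).preimage A).mono Set.inter_subset_left Set.inter_subset_left
  have hmeas : ∀ m, MeasurableSet (fiber m) := fun m =>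
    (hA.1 (measurableSet_singleton m)).inter (measurable_binomialThinning (fun i => (hBer i).1)
      measurable_const (measurableSet_singleton s))
  have hindep : ∀ m, IndepFun A (binomialThinning B (fun _ => m)) ℙ := fun m =>
    hAB.comp (ψ := fun b : ℕ → Bool => ∑ i ∈ Finset.range m, if b i then 1 else 0)
      measurable_id (Finset.measurable_sum _ fun i _ =>
        (measurable_from_top (f := fun x : Bool => if x then 1 else 0)).comp
          (measurable_pi_apply i))
  calc (ℙ : Measure Ω) {ω | binomialThinning B A ω = s}
      = ∑' m, ℙ (A ⁻¹' {m}) * ℙ (binomialThinning B (fun _ => m) ⁻¹' {s}) := by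
        rw [hfibers, measure_iUnion hdisj hmeas]
        exact tsum_congr fun m => (hindep m).measure_inter_preimage_eq_mul _ _
          (measurableSet_singleton m) (measurableSet_singleton s)
    _ = ENNReal.ofReal (Real.exp (-(lam * p)) * (lam * p) ^ s / s.factorial) := by
        simp only [Set.preimage, Set.mem_singleton_iff, hA.2,
          measure_binomialThinning_const_eq hp0 hp1 hB hBer]
        exact tsum_ofReal_poisson_mul_binomial hlam hp0 hp1 s

end PoissonRV

section RootedTree

variable {V : Type*}

def ancestors (pa : V → V) (v : V) : Set V := {u | ∃ n, pa^[n] v = u}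

theorem mem_ancestors_self (pa : V → V) (v : V) : v ∈ ancestors pa v := ⟨0, rfl⟩

theorem ancestors_apply_subset (pa : V → V) (v : V) : ancestors pa (pa v) ⊆ ancestors pa v :=
  fun _ ⟨n, hn⟩ => ⟨n + 1, by rwa [Function.iterate_succ_apply]⟩

theorem notMem_ancestors_apply {pa : V → V} {r : V} (hr : pa r = r)
    (hreach : ∀ w, ∃ n, pa^[n] w = r) {v : V} (hv : v ≠ r) : v ∉ ancestors pa (pa v) := by
  rintro ⟨k, hk⟩
  have hperiodic : pa^[k + 1] v = v := by rwa [Function.iterate_succ_apply]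
  obtain ⟨n, hn⟩ := hreach v
  have hcycle : pa^[(k + 1) * n] v = v := by
    rw [Function.iterate_mul]; exact Function.iterate_fixed hperiodic n
  have hroot : pa^[(k + 1) * n] v = r := by
    rw [show (k + 1) * n = k * n + n by ring, Function.iterate_add_apply, hn,
      Function.iterate_fixed hr]
  exact hv (hcycle.symm.trans hroot)

theorem induction_on_parent {pa : V → V} {r : V} (hreach : ∀ v, ∃ n, pa^[n] v = r)
    {P : V → Prop} (hroot : P r) (hstep : ∀ v, v ≠ r → P (pa v) → P v) (v : V) : P v := by
  obtain ⟨n, hn⟩ := hreach v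
  induction n generalizing v with
  | zero => rwa [show v = r from hn]
  | succ n ih =>
    by_cases hv : v = r
    · exact hv ▸ hroot
    · exact hstep v hv (ih (pa v) (by rwa [← Function.iterate_succ_apply]))

end RootedTree

theorem ProbabilityTheory.iIndepFun.indepFun_of_measurable_biSup {Ω ι β γ δ : Type*}
    [MeasurableSpace Ω] [MeasurableSpace β] [MeasurableSpace γ] [MeasurableSpace δ]
    {μ : Measure Ω} {F : ι → Ω → β} (hF : iIndepFun F μ) (hFm : ∀ i, Measurable (F i))
    {S T : Set ι} (hST : Disjoint S T) {f : Ω → γ} {g : Ω → δ}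
    (hf : Measurable[⨆ i ∈ S, MeasurableSpace.comap (F i) inferInstance] f)
    (hg : Measurable[⨆ i ∈ T, MeasurableSpace.comap (F i) inferInstance] g) :
    IndepFun f g μ :=
  (IndepFun_iff_Indep f g μ).2 <| indep_of_indep_of_le
    (indep_iSup_of_disjoint (fun i => (hFm i).comap_le) hF.iIndep hST) hf.comap_le hg.comap_le

section Innovations

variable {V Ω : Type*}

def innovation (L : V → Ω → ℕ) (I : V → ℕ → Ω → Bool) : V ⊕ V × ℕ → Ω → ℕ :=
  Sum.elim L (fun p ω => if I p.1 p.2 ω then 1 else 0)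

abbrev innovationSigma (L : V → Ω → ℕ) (I : V → ℕ → Ω → Bool) (S : Set (V ⊕ V × ℕ)) :
    MeasurableSpace Ω :=
  ⨆ x ∈ S, MeasurableSpace.comap (innovation L I x) inferInstance

variable {L : V → Ω → ℕ} {I : V → ℕ → Ω → Bool} {S T : Set (V ⊕ V × ℕ)}

theorem innovationSigma_mono (hST : S ⊆ T) : innovationSigma L I S ≤ innovationSigma L I T :=
  biSup_mono hST

theorem measurable_innovationSigma_innovation {x} (hx : x ∈ S) :
    Measurable[innovationSigma L I S] (innovation L I x) :=
  Measurable.of_comap_le (le_biSup (fun x => MeasurableSpace.comap (innovation L I x) _) hx)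

theorem measurable_innovationSigma_bernoulli {v : V} {i : ℕ} (h : Sum.inr (v, i) ∈ S) :
    Measurable[innovationSigma L I S] (I v i) := by
  rw [← decide_eq_one_comp_ite (I v i)]
  exact measurable_from_top.comp (measurable_innovationSigma_innovation h)

theorem measurable_innovationSigma_ancestors {pa : V → V} {r : V}
    {N : V → Ω → ℕ} (hreach : ∀ v, ∃ n, pa^[n] v = r) (hNr : ∀ ω, N r ω = L r ω)
    (hNrec : ∀ v, v ≠ r → ∀ ω, N v ω = L v ω + binomialThinning (I v) (N (pa v)) ω) (v : V) :
    Measurable[innovationSigma L I (Sum.elim id Prod.fst ⁻¹' ancestors pa v)] (N v) := by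
  induction v using induction_on_parent hreach with
  | hroot =>
    rw [funext hNr]
    exact measurable_innovationSigma_innovation (S := _ ⁻¹' _) (x := .inl r)
      (mem_ancestors_self pa r)
  | hstep v hv hpar =>
    rw [funext (hNrec v hv)]
    refine Measurable.add (measurable_innovationSigma_innovation (x := .inl v)
      (mem_ancestors_self pa v)) (measurable_binomialThinning (fun i =>
        measurable_innovationSigma_bernoulli (mem_ancestors_self pa v)) ?_)
    exact hpar.mono (innovationSigma_mono (Set.preimage_mono (ancestors_apply_subset pa v))) le_rfl

end Innovations

section InnovationIndependence

variable {V Ω : Type*} [MeasurableSpace Ω] {μ : Measure Ω} {L : V → Ω → ℕ}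
  {I : V → ℕ → Ω → Bool}

theorem measurable_innovation (hL : ∀ v, Measurable (L v)) (hI : ∀ v i, Measurable (I v i)) :
    ∀ x, Measurable (innovation L I x)
  | .inl v => hL v
  | .inr (v, i) => Measurable.ite (hI v i (measurableSet_singleton true)) measurable_const
      measurable_const

theorem iIndepFun_bernoulli (hind : iIndepFun (innovation L I) μ) (v : V) :
    iIndepFun (I v) μ := by
  have hinj : Function.Injective fun i : ℕ => (Sum.inr (v, i) : V ⊕ V × ℕ) := fun _ _ h => by
    simpa using h
  convert (hind.precomp hinj).comp (fun _ n => decide (n = 1)) fun _ => measurable_from_top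
  exact (decide_eq_one_comp_ite (I v _)).symm

variable {U : Set V} {v : V} {X : Ω → ℕ}

theorem indepFun_bernoulli_of_measurable_innovationSigma
    (hind : iIndepFun (innovation L I) μ) (hL : ∀ v, Measurable (L v))
    (hI : ∀ v i, Measurable (I v i)) (hv : v ∉ U)
    (hX : Measurable[innovationSigma L I (Sum.elim id Prod.fst ⁻¹' U)] X) :
    IndepFun X (fun ω i => I v i ω) μ :=
  hind.indepFun_of_measurable_biSup (measurable_innovation hL hI)
    (T := Set.range fun i => .inr (v, i))
    (Set.disjoint_left.2 <| by rintro _ hx ⟨i, rfl⟩; exact hv hx) hX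
    (by
      -- `measurable_pi_lambda` takes the σ-algebra on `Ω` as an instance
      let _ : MeasurableSpace Ω := innovationSigma L I (Set.range fun i => .inr (v, i))
      exact measurable_pi_lambda _ fun i => measurable_innovationSigma_bernoulli ⟨i, rfl⟩)

theorem indepFun_innovation_binomialThinning
    (hind : iIndepFun (innovation L I) μ) (hL : ∀ v, Measurable (L v))
    (hI : ∀ v i, Measurable (I v i)) (hv : v ∉ U)
    (hX : Measurable[innovationSigma L I (Sum.elim id Prod.fst ⁻¹' U)] X) :
    IndepFun (L v) (binomialThinning (I v) X) μ := by
  set T := Sum.elim id Prod.fst ⁻¹' U ∪ Set.range fun i => (.inr (v, i) : V ⊕ V × ℕ)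
  have hdisj : Disjoint {.inl v} T := by
    rw [Set.disjoint_singleton_left]
    rintro (h | ⟨_, h⟩)
    exacts [hv h, Sum.inr_ne_inl h]
  have hLv : Measurable[innovationSigma L I {.inl v}] (L v) :=
    measurable_innovationSigma_innovation (x := .inl v) rfl
  have hthin : Measurable[innovationSigma L I T] (binomialThinning (I v) X) :=
    measurable_binomialThinning
      (fun i => measurable_innovationSigma_bernoulli (Or.inr ⟨i, rfl⟩))
      (hX.mono (innovationSigma_mono Set.subset_union_left) le_rfl)
  exact hind.indepFun_of_measurable_biSup (measurable_innovation hL hI) hdisj hLv hthin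

end InnovationIndependence

theorem mpmrf_marginals_poisson_general
    {V Ω : Type*} [Fintype V] [DecidableEq V] [MeasureSpace Ω]
    [IsProbabilityMeasure (ℙ : Measure Ω)]
    (G : SimpleGraph V)
    (r : V) (pa : V → V) (hpa : IsParentMap G r pa)
    (lam : ℝ) (hlam : 0 < lam)
    (α : V → V → ℝ) (hα : ∀ a b, G.Adj a b → α a b ∈ Set.Ioo (0 : ℝ) 1)
    (N : V → Ω → ℕ) (hN : IsMPMRF lam α pa r N) :
    ∀ v : V, IsPoissonRV (N v) lam := by
  obtain ⟨hroot, hadj, hreach⟩ := hpa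
  obtain ⟨L, I, hind, hLr, hLv, hI, hNr, hNv⟩ := hN
  have hLm : ∀ v, Measurable (L v) := fun v =>
    if hv : v = r then hv ▸ hLr.1 else (hLv v hv).1
  have hIm : ∀ v i, Measurable (I v i) := fun v i => (hI v i).1
  have hNanc := measurable_innovationSigma_ancestors (I := I) hreach hNr hNv
  intro v
  induction v using induction_on_parent hreach with
  | hroot => rwa [funext hNr]
  | hstep v hv hpar =>
    obtain ⟨hα0, hα1⟩ := hα _ _ (hadj v hv)
    have hvanc := notMem_ancestors_apply hroot hreach hv
    have hthin := isPoissonRV_binomialThinning hpar hlam.le hα0.le hα1.le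
      (iIndepFun_bernoulli hind v) (hI v)
      (indepFun_bernoulli_of_measurable_innovationSigma hind hLm hIm hvanc (hNanc (pa v)))
    have hNv' : N v = L v + binomialThinning (I v) (N (pa v)) := funext (hNv v hv)
    rw [hNv', show lam = lam * (1 - α (pa v) v) + lam * α (pa v) v by ring]
    exact (hLv v hv).add hthin (by nlinarith) (by positivity)
      (indepFun_innovation_binomialThinning hind hLm hIm hvanc (hNanc (pa v)))

/-- every component of an MPMRF has the Poisson(λ) distribution. -/
theorem mpmrf_marginals_poisson
    {V Ω : Type*} [Fintype V] [DecidableEq V] [MeasureSpace Ω]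
    [IsProbabilityMeasure (ℙ : Measure Ω)]
    (d : ℕ) (hd : Fintype.card V = d)
    (G : SimpleGraph V) (hG : G.IsTree)
    (r : V) (pa : V → V) (hpa : IsParentMap G r pa)
    (lam : ℝ) (hlam : 0 < lam)
    (α : V → V → ℝ) (hα : ∀ a b, G.Adj a b → α a b ∈ Set.Ioo (0 : ℝ) 1)
    (N : V → Ω → ℕ) (hN : IsMPMRF lam α pa r N) :
    ∀ v : V, IsPoissonRV (N v) lam :=
  mpmrf_marginals_poisson_general G r pa hpa lam hlam α hα N hN

end
end

section
/- Supermodular ordering of synecdochic pairs implies ordering of contributions to TVaR under Euler's rule: let X=(X_v)_{v∈V} be a finite random vector of ℕ-valued integrable random variables, S=∑_{v∈V}X_v, and u,w∈V. If (X_u,S)⪯_sm(X_w,S), then C^TVaR_κ(X_u;S)≤C^TVaR_κ(X_w;S) for every κ∈[0,1). -/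
open MeasureTheory ProbabilityTheory
open scoped ENNReal Classical

noncomputable section

/-- Value-at-Risk at level `κ` of a real random variable. -/
def VaR {Ω : Type*} [MeasureSpace Ω] (Y : Ω → ℝ) (κ : ℝ) : ℝ :=
  sInf {x : ℝ | κ ≤ ((ℙ : Measure Ω) {ω | Y ω ≤ x}).toReal}

/-- Contribution of `X` to the TVaR of `Y` at level `κ` under Euler's rule. -/
def TVaRContrib {Ω : Type*} [MeasureSpace Ω] (X Y : Ω → ℝ) (κ : ℝ) : ℝ :=
  (1 / (1 - κ)) *
    ((∫ ω, X ω * (if VaR Y κ < Y ω then 1 else 0) ∂ℙ) +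
      ((((ℙ : Measure Ω) {ω | Y ω ≤ VaR Y κ}).toReal - κ) /
          ((ℙ : Measure Ω) {ω | Y ω = VaR Y κ}).toReal) *
        (∫ ω, X ω * (if Y ω = VaR Y κ then 1 else 0) ∂ℙ))

/-! Euler's rule writes the TVaR contribution as `E[X · g(S)] / (1 - κ)` with
`g(s) = 1{s > q} + c · 1{s = q}`, where `q = VaR_κ(S)` and `c = (P(S ≤ q) - κ) / P(S = q)`.
Since `q` is a quantile, `P(S < q) ≤ κ ≤ P(S ≤ q)`, so `c ∈ [0, 1]` and `g` is nondecreasing and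
bounded. Hence `(x, s) ↦ x · g(s)` is supermodular and integrable along both pairs, and the
supermodular order compares the two expectations. -/

open Filter Topology Set

lemma supermodular_mul_of_monotone {g : ℝ → ℝ} (hg : Monotone g) :
    Supermodular fun p => p.1 * g p.2 := by
  rintro ⟨a, s⟩ ⟨b, t⟩
  change a * g s + b * g t ≤ min a b * g (min s t) + max a b * g (max s t)
  rcases le_total s t with hst | hst <;> rcases le_total a b with hab | hab <;>
    simp only [min_eq_left, min_eq_right, max_eq_left, max_eq_right, hst, hab] <;>
    nlinarith [mul_nonneg (sub_nonneg.2 hab) (sub_nonneg.2 (hg hst))]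

namespace ProbabilityTheory

variable {μ : Measure ℝ} {κ : ℝ}

lemma bddBelow_setOf_le_cdf (hκ : 0 < κ) : BddBelow {x | κ ≤ cdf μ x} := by
  obtain ⟨b, hb⟩ := ((tendsto_cdf_atBot μ).eventually_lt_const hκ).exists_forall_of_atBot
  exact ⟨b, fun x hx => le_of_not_gt fun hxb => (hb x hxb.le).not_ge hx⟩

lemma nonempty_setOf_le_cdf (hκ : κ < 1) : {x | κ ≤ cdf μ x}.Nonempty :=
  ((tendsto_cdf_atTop μ).eventually_const_le hκ).exists

lemma le_cdf_sInf_setOf_le_cdf (hκ : κ ∈ Ioo 0 1) :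
    κ ≤ cdf μ (sInf {x | κ ≤ cdf μ x}) := by
  refine ge_of_tendsto ((cdf μ).right_continuous _ |>.mono Ioi_subset_Ici_self)
    (eventually_nhdsWithin_of_forall fun x hx => ?_)
  obtain ⟨a, ha, hax⟩ := exists_lt_of_csInf_lt (nonempty_setOf_le_cdf hκ.2) hx
  exact ha.trans (monotone_cdf μ hax.le)

lemma measure_Iio_sInf_setOf_le_cdf_le [IsProbabilityMeasure μ] (hκ : 0 < κ) :
    μ (Iio (sInf {x | κ ≤ cdf μ x})) ≤ ENNReal.ofReal κ := by
  have h := (cdf μ).measure_Iio (tendsto_cdf_atBot μ) (sInf {x | κ ≤ cdf μ x})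
  rw [measure_cdf, sub_zero] at h
  refine h ▸ ENNReal.ofReal_le_ofReal (le_of_tendsto ((monotone_cdf μ).tendsto_leftLim _)
    (eventually_nhdsWithin_of_forall fun x hx => ?_))
  exact (not_le.1 fun hxA => (csInf_le (bddBelow_setOf_le_cdf hκ) hxA).not_gt hx).le

end ProbabilityTheory

section VaR

variable {κ : ℝ} {Ω : Type*} [MeasureSpace Ω] [IsProbabilityMeasure (ℙ : Measure Ω)] {S : Ω → ℝ}

lemma VaR_eq_sInf_setOf_le_cdf_map (hS : AEMeasurable S) (κ : ℝ) :
    VaR S κ = sInf {x | κ ≤ cdf ((ℙ : Measure Ω).map S) x} := by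
  have := Measure.isProbabilityMeasure_map hS
  simp only [VaR, cdf_eq_real, measureReal_def,
    Measure.map_apply_of_aemeasurable hS measurableSet_Iic]
  rfl

lemma le_measure_le_VaR (hS : AEMeasurable S) (hκ : κ ∈ Ico 0 1) :
    κ ≤ ((ℙ : Measure Ω) {ω | S ω ≤ VaR S κ}).toReal := by
  rcases hκ.1.eq_or_lt with rfl | hκ0
  · exact ENNReal.toReal_nonneg
  have := Measure.isProbabilityMeasure_map hS
  have h := le_cdf_sInf_setOf_le_cdf (μ := (ℙ : Measure Ω).map S) ⟨hκ0, hκ.2⟩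
  rwa [← VaR_eq_sInf_setOf_le_cdf_map hS, cdf_eq_real, measureReal_def,
    Measure.map_apply_of_aemeasurable hS measurableSet_Iic] at h

lemma measure_lt_VaR_le (hS : AEMeasurable S) (hS0 : ∀ᵐ ω ∂ℙ, 0 ≤ S ω) (hκ : κ ∈ Ico 0 1) :
    ((ℙ : Measure Ω) {ω | S ω < VaR S κ}).toReal ≤ κ := by
  rcases hκ.1.eq_or_lt with rfl | hκ0
  -- `VaR S 0 = sInf univ` is the junk value `0`, so `{S < VaR S 0}` is null only because `0 ≤ S`.
  · have hVaR : VaR S 0 = 0 := by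
      simp only [VaR, ENNReal.toReal_nonneg, ofPred_true]
      exact Real.sInf_of_not_bddBelow not_bddBelow_univ
    have hneg : (ℙ : Measure Ω) {ω | S ω < 0} = 0 :=
      measure_eq_zero_iff_ae_notMem.2 (hS0.mono fun ω h => not_lt.2 h)
    simp [hVaR, hneg]
  refine ENNReal.toReal_le_of_le_ofReal hκ0.le ?_
  have := Measure.isProbabilityMeasure_map hS
  have h := measure_Iio_sInf_setOf_le_cdf_le (μ := (ℙ : Measure Ω).map S) hκ0
  rwa [Measure.map_apply_of_aemeasurable hS measurableSet_Iio,
    ← VaR_eq_sInf_setOf_le_cdf_map hS] at h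

end VaR

def tvarWeight (q c s : ℝ) : ℝ := (if q < s then 1 else 0) + c * (if s = q then 1 else 0)

section TVaRWeight

variable {q c : ℝ}

lemma measurable_tvarWeight : Measurable (tvarWeight q c) :=
  (measurable_const.ite measurableSet_Ioi measurable_const).add
    (measurable_const.mul (measurable_const.ite (measurableSet_singleton q) measurable_const))

lemma monotone_tvarWeight (hc : c ∈ Icc 0 1) : Monotone (tvarWeight q c) := by
  intro s t hst
  obtain ⟨hc0, hc1⟩ := hc
  simp only [tvarWeight]
  split_ifs <;> grind

lemma abs_tvarWeight_le_one (hc : c ∈ Icc 0 1) (s : ℝ) : |tvarWeight q c s| ≤ 1 := by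
  obtain ⟨hc0, hc1⟩ := hc
  simp only [tvarWeight]
  rw [abs_le]
  split_ifs <;> constructor <;> linarith

end TVaRWeight

def tvarAtomCoeff {Ω : Type*} [MeasureSpace Ω] (Y : Ω → ℝ) (κ : ℝ) : ℝ :=
  (((ℙ : Measure Ω) {ω | Y ω ≤ VaR Y κ}).toReal - κ) / ((ℙ : Measure Ω) {ω | Y ω = VaR Y κ}).toReal

section TVaRContrib

variable {Ω : Type*} [MeasureSpace Ω] {X Y : Ω → ℝ} {κ : ℝ}

lemma MeasureTheory.Integrable.mul_comp_of_abs_le_one (hX : Integrable X) (hY : AEMeasurable Y)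
    {g : ℝ → ℝ} (hg : Measurable g) (hg1 : ∀ s, |g s| ≤ 1) :
    Integrable fun ω => X ω * g (Y ω) :=
  hX.mul_bdd (hg.comp_aemeasurable hY).aestronglyMeasurable (ae_of_all _ fun ω => hg1 (Y ω))

lemma TVaRContrib_eq_integral_mul_tvarWeight (hX : Integrable X) (hY : AEMeasurable Y) :
    TVaRContrib X Y κ =
      1 / (1 - κ) * ∫ ω, X ω * tvarWeight (VaR Y κ) (tvarAtomCoeff Y κ) (Y ω) := by
  have hgt := hX.mul_comp_of_abs_le_one hY (g := fun s => if VaR Y κ < s then 1 else 0)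
    (measurable_const.ite measurableSet_Ioi measurable_const) fun s => by split_ifs <;> simp
  have heq := hX.mul_comp_of_abs_le_one hY (g := fun s => if s = VaR Y κ then 1 else 0)
    (measurable_const.ite (measurableSet_singleton _) measurable_const) fun s => by
      split_ifs <;> simp
  rw [TVaRContrib, ← integral_const_mul, ← integral_add hgt (heq.const_mul _)]
  simp only [tvarWeight, tvarAtomCoeff]
  congr 2 with ω
  ring

lemma tvarAtomCoeff_mem_Icc [IsFiniteMeasure (ℙ : Measure Ω)] (hY : AEMeasurable Y)
    (hlt : ((ℙ : Measure Ω) {ω | Y ω < VaR Y κ}).toReal ≤ κ)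
    (hle : κ ≤ ((ℙ : Measure Ω) {ω | Y ω ≤ VaR Y κ}).toReal) :
    tvarAtomCoeff Y κ ∈ Icc 0 1 := by
  have hsplit : ((ℙ : Measure Ω) {ω | Y ω ≤ VaR Y κ}).toReal =
      ((ℙ : Measure Ω) {ω | Y ω < VaR Y κ}).toReal +
        ((ℙ : Measure Ω) {ω | Y ω = VaR Y κ}).toReal := by
    simp only [← measureReal_def, le_iff_lt_or_eq, ofPred_or]
    exact measureReal_union₀ (hY.nullMeasurableSet_preimage (measurableSet_singleton _))
      (Disjoint.aedisjoint (disjoint_left.2 fun ω h₁ h₂ => h₁.ne h₂))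
  exact ⟨div_nonneg (sub_nonneg.2 hle) ENNReal.toReal_nonneg,
    div_le_one_of_le₀ (by linarith) ENNReal.toReal_nonneg⟩

theorem TVaRContrib_le_of_supermodularLE [IsProbabilityMeasure (ℙ : Measure Ω)]
    {X₁ X₂ S : Ω → ℝ} (hX₁ : Integrable X₁) (hX₂ : Integrable X₂) (hS : AEMeasurable S)
    (hS0 : ∀ᵐ ω ∂ℙ, 0 ≤ S ω)
    (hsm : SupermodularLE (fun ω => (X₁ ω, S ω)) (fun ω => (X₂ ω, S ω))) (hκ : κ ∈ Ico 0 1) :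
    TVaRContrib X₁ S κ ≤ TVaRContrib X₂ S κ := by
  have hc : tvarAtomCoeff S κ ∈ Icc 0 1 :=
    tvarAtomCoeff_mem_Icc hS (measure_lt_VaR_le hS hS0 hκ) (le_measure_le_VaR hS hκ)
  have hint : ∀ X : Ω → ℝ, Integrable X →
      Integrable fun ω => X ω * tvarWeight (VaR S κ) (tvarAtomCoeff S κ) (S ω) :=
    fun X hX => hX.mul_comp_of_abs_le_one hS measurable_tvarWeight (abs_tvarWeight_le_one hc)
  have hκ1 : 0 ≤ 1 / (1 - κ) := one_div_nonneg.2 (sub_nonneg.2 hκ.2.le)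
  rw [TVaRContrib_eq_integral_mul_tvarWeight hX₁ hS,
    TVaRContrib_eq_integral_mul_tvarWeight hX₂ hS]
  exact mul_le_mul_of_nonneg_left
    (hsm _ (supermodular_mul_of_monotone (monotone_tvarWeight hc)) (hint X₁ hX₁) (hint X₂ hX₂)) hκ1

end TVaRContrib

theorem supermodular_pair_implies_tvar_contrib_le_general
    {V Ω : Type*} [Fintype V] [MeasureSpace Ω] [IsProbabilityMeasure (ℙ : Measure Ω)]
    (X : V → Ω → ℕ)
    (hint : ∀ v, Integrable (fun ω => (X v ω : ℝ)) ℙ)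
    (u w : V)
    (hsm : SupermodularLE (fun ω => ((X u ω : ℝ), ((∑ v, X v ω : ℕ) : ℝ)))
      (fun ω => ((X w ω : ℝ), ((∑ v, X v ω : ℕ) : ℝ)))) :
    ∀ κ ∈ Set.Ico (0 : ℝ) 1,
      TVaRContrib (fun ω => (X u ω : ℝ)) (fun ω => ((∑ v, X v ω : ℕ) : ℝ)) κ
        ≤ TVaRContrib (fun ω => (X w ω : ℝ)) (fun ω => ((∑ v, X v ω : ℕ) : ℝ)) κ := by
  intro κ hκ
  have hS : AEMeasurable (fun ω => ((∑ v, X v ω : ℕ) : ℝ)) ℙ := by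
    simp only [Nat.cast_sum]
    exact Finset.aemeasurable_fun_sum _ fun v _ => (hint v).aemeasurable
  exact TVaRContrib_le_of_supermodularLE (hint u) (hint w) hS
    (ae_of_all _ fun _ => Nat.cast_nonneg _) hsm hκ

/-- `(X_u, S) ⪯_sm (X_w, S)` implies
`C^TVaR_κ(X_u; S) ≤ C^TVaR_κ(X_w; S)` for every `κ ∈ [0, 1)`. -/
theorem supermodular_pair_implies_tvar_contrib_le
    {V Ω : Type*} [Fintype V] [MeasureSpace Ω] [IsProbabilityMeasure (ℙ : Measure Ω)]
    (X : V → Ω → ℕ)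
    (hmeas : ∀ v, Measurable (X v))
    (hint : ∀ v, Integrable (fun ω => (X v ω : ℝ)) ℙ)
    (u w : V)
    (hsm : SupermodularLE (fun ω => ((X u ω : ℝ), ((∑ v, X v ω : ℕ) : ℝ)))
      (fun ω => ((X w ω : ℝ), ((∑ v, X v ω : ℕ) : ℝ)))) :
    ∀ κ ∈ Set.Ico (0 : ℝ) 1,
      TVaRContrib (fun ω => (X u ω : ℝ)) (fun ω => ((∑ v, X v ω : ℕ) : ℝ)) κ
        ≤ TVaRContrib (fun ω => (X w ω : ℝ)) (fun ω => ((∑ v, X v ω : ℕ) : ℝ)) κ :=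
  supermodular_pair_implies_tvar_contrib_le_general X hint u w hsm
end
end

section
/- Tail expectation ordering implies TVaR-contribution ordering: let X=(X_i)_{i=1}^d be an integrable random vector with values in ℕ^d and let Y=∑_{i=1}^d X_i. Fix v,w∈{1,…,d}. If E[X_v·1{Y≥k}]≤E[X_w·1{Y≥k}] for every k∈ℕ, then C^TVaR_κ(X_v;Y)≤C^TVaR_κ(X_w;Y) for every κ∈[0,1). -/
open MeasureTheory ProbabilityTheory
open scoped ENNReal Classical

noncomputable section

/-
For an ℕ-valued total `Y` and `κ ∈ [0, 1)`, `VaR_κ(Y)` is the least `n ∈ ℕ` with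
`κ ≤ P(Y ≤ n)`. Writing `T_X(k) = E[X·1{Y ≥ k}]`, the event `{Y > n}` has tail `T_X(n+1)` and
the atom `{Y = n}` has `T_X(n) - T_X(n+1)`, so the Euler contribution is
`((1 - c)·T_X(n+1) + c·T_X(n)) / (1 - κ)` with `c = (P(Y ≤ n) - κ) / P(Y = n)`.
Minimality of `n` gives `P(Y < n) ≤ κ ≤ P(Y ≤ n)`, hence `c ∈ [0, 1]`: the contribution is a
convex combination of two tail expectations, and is therefore monotone in them.
-/

section NatValued

variable {Ω : Type*}

lemma integrable_mul_ite_le [MeasurableSpace Ω] {μ : Measure Ω} {f : Ω → ℝ} {Y : Ω → ℕ}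
    (hf : Integrable f μ) (hY : Measurable Y) (k : ℕ) :
    Integrable (fun ω => f ω * if k ≤ Y ω then 1 else 0) μ := by
  have hind : (fun ω => f ω * if k ≤ Y ω then (1 : ℝ) else 0) = {ω | k ≤ Y ω}.indicator f := by
    ext ω
    simp [Set.indicator_apply]
  rw [hind]
  exact hf.indicator (hY measurableSet_Ici)

lemma ite_natCast_lt_eq (n m : ℕ) :
    (if (n : ℝ) < m then (1 : ℝ) else 0) = if n + 1 ≤ m then 1 else 0 := by
  simp only [Nat.cast_lt, Nat.add_one_le_iff]

lemma ite_natCast_eq_eq_sub (n m : ℕ) :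
    (if (m : ℝ) = n then (1 : ℝ) else 0) =
      (if n ≤ m then 1 else 0) - if n + 1 ≤ m then 1 else 0 := by
  simp only [Nat.cast_inj]
  split_ifs <;> first | omega | norm_num

variable [MeasureSpace Ω]

def tailExpectation (f : Ω → ℝ) (Y : Ω → ℕ) (k : ℕ) : ℝ :=
  ∫ ω, f ω * (if k ≤ Y ω then 1 else 0) ∂ℙ

lemma integral_mul_ite_natCast_eq {f : Ω → ℝ} {Y : Ω → ℕ} (hf : Integrable f ℙ)
    (hY : Measurable Y) (n : ℕ) :
    ∫ ω, f ω * (if (Y ω : ℝ) = n then 1 else 0) ∂ℙ =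
      tailExpectation f Y n - tailExpectation f Y (n + 1) := by
  rw [tailExpectation, tailExpectation, ← integral_sub (integrable_mul_ite_le hf hY n)
    (integrable_mul_ite_le hf hY (n + 1))]
  congr 1 with ω
  rw [ite_natCast_eq_eq_sub]
  ring

lemma exists_le_measure_le_of_lt_one [IsProbabilityMeasure (ℙ : Measure Ω)] (Y : Ω → ℕ)
    {κ : ℝ} (hκ : κ < 1) : ∃ n : ℕ, κ ≤ (ℙ {ω | Y ω ≤ n}).toReal := by
  have hunion : (⋃ n : ℕ, {ω | Y ω ≤ n}) = Set.univ :=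
    Set.eq_univ_of_forall fun ω => Set.mem_iUnion.2 ⟨Y ω, show Y ω ≤ Y ω from le_rfl⟩
  have hmono : Monotone fun n : ℕ => {ω | Y ω ≤ n} :=
    fun m n hmn ω (h : Y ω ≤ m) => h.trans hmn
  have hlim := tendsto_measure_iUnion_atTop (μ := (ℙ : Measure Ω)) hmono
  rw [hunion, measure_univ] at hlim
  exact (((ENNReal.tendsto_toReal ENNReal.one_ne_top).comp hlim).eventually
    (eventually_ge_nhds (by simpa using hκ))).exists

lemma measure_le_toReal_lt_of_isLeast {Y : Ω → ℕ} {κ : ℝ} {m n : ℕ}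
    (hn : IsLeast {k : ℕ | κ ≤ (ℙ {ω | Y ω ≤ k}).toReal} n) (hm : m < n) :
    (ℙ {ω | Y ω ≤ m}).toReal < κ :=
  lt_of_not_ge fun h => (hn.2 h).not_gt hm

lemma measure_lt_toReal_le_of_isLeast {Y : Ω → ℕ} {κ : ℝ} {n : ℕ} (hκ : 0 ≤ κ)
    (hn : IsLeast {k : ℕ | κ ≤ (ℙ {ω | Y ω ≤ k}).toReal} n) :
    (ℙ {ω | Y ω < n}).toReal ≤ κ := by
  cases n with
  | zero => simpa using hκ
  | succ m => simpa [Nat.lt_succ_iff] using (measure_le_toReal_lt_of_isLeast hn m.lt_succ_self).le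

variable [IsProbabilityMeasure (ℙ : Measure Ω)] {Y : Ω → ℕ} {κ : ℝ} {n : ℕ}

lemma VaR_natCast_eq_of_isLeast (hκ : 0 ≤ κ)
    (hn : IsLeast {k : ℕ | κ ≤ (ℙ {ω | Y ω ≤ k}).toReal} n) :
    VaR (fun ω => (Y ω : ℝ)) κ = n := by
  rcases hκ.eq_or_lt with rfl | hκ
  · obtain rfl : n = 0 := Nat.le_zero.1 (hn.2 ENNReal.toReal_nonneg)
    simp [VaR]
  suffices hset : {x : ℝ | κ ≤ (ℙ {ω | (Y ω : ℝ) ≤ x}).toReal} = Set.Ici (n : ℝ) by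
    rw [VaR, hset, csInf_Ici]
  ext x
  refine ⟨fun (hx : κ ≤ _) => ?_, fun (hx : (n : ℝ) ≤ x) => ?_⟩
  · change (n : ℝ) ≤ x
    by_contra! hxn
    rcases lt_or_ge x 0 with hx0 | hx0
    · have hempty : {ω | (Y ω : ℝ) ≤ x} = ∅ :=
        Set.eq_empty_of_forall_notMem fun ω h => (hx0.trans_le (Nat.cast_nonneg _)).not_ge h
      simp [hempty] at hx
      linarith
    · have hfloor : {ω | (Y ω : ℝ) ≤ x} = {ω | Y ω ≤ ⌊x⌋₊} := by
        ext ω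
        exact (Nat.le_floor_iff hx0).symm
      rw [hfloor] at hx
      exact (measure_le_toReal_lt_of_isLeast hn ((Nat.floor_lt hx0).2 hxn)).not_ge hx
  · refine hn.1.trans (ENNReal.toReal_mono (measure_ne_top _ _) (measure_mono ?_))
    exact fun ω (h : Y ω ≤ n) => (Nat.cast_le.2 h).trans hx

lemma measure_le_toReal_eq_add (hY : Measurable Y) (n : ℕ) :
    (ℙ {ω | Y ω ≤ n}).toReal =
      (ℙ {ω | Y ω = n}).toReal + (ℙ {ω | Y ω < n}).toReal := by
  have hsplit : {ω | Y ω ≤ n} = {ω | Y ω = n} ∪ {ω | Y ω < n} := by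
    ext ω
    exact le_iff_eq_or_lt (a := Y ω)
  rw [hsplit, measure_union _ (measurableSet_lt hY measurable_const),
    ENNReal.toReal_add (measure_ne_top _ _) (measure_ne_top _ _)]
  exact Set.disjoint_left.2 fun ω (h₁ : Y ω = n) (h₂ : Y ω < n) => h₂.ne h₁

variable (Y κ n) in
def atomWeight : ℝ :=
  ((ℙ {ω | Y ω ≤ n}).toReal - κ) / (ℙ {ω | Y ω = n}).toReal

lemma atomWeight_mem_Icc (hY : Measurable Y) (hκ : 0 ≤ κ)
    (hn : IsLeast {k : ℕ | κ ≤ (ℙ {ω | Y ω ≤ k}).toReal} n) :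
    atomWeight Y κ n ∈ Set.Icc 0 1 := by
  refine ⟨div_nonneg (sub_nonneg.2 hn.1) ENNReal.toReal_nonneg,
    div_le_one_of_le₀ ?_ ENNReal.toReal_nonneg⟩
  linarith [measure_le_toReal_eq_add hY n, measure_lt_toReal_le_of_isLeast hκ hn]

lemma TVaRContrib_natCast_eq {f : Ω → ℝ} (hf : Integrable f ℙ) (hY : Measurable Y)
    (hκ : 0 ≤ κ) (hn : IsLeast {k : ℕ | κ ≤ (ℙ {ω | Y ω ≤ k}).toReal} n) :
    TVaRContrib f (fun ω => (Y ω : ℝ)) κ =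
      (1 / (1 - κ)) * ((1 - atomWeight Y κ n) * tailExpectation f Y (n + 1) +
        atomWeight Y κ n * tailExpectation f Y n) := by
  rw [TVaRContrib, VaR_natCast_eq_of_isLeast hκ hn, integral_mul_ite_natCast_eq hf hY]
  simp only [ite_natCast_lt_eq, Nat.cast_le, Nat.cast_inj]
  unfold tailExpectation atomWeight
  ring

lemma TVaRContrib_natCast_mono {f g : Ω → ℝ} (hf : Integrable f ℙ) (hg : Integrable g ℙ)
    (hY : Measurable Y) (htail : ∀ k, tailExpectation f Y k ≤ tailExpectation g Y k)
    (hκ : κ ∈ Set.Ico (0 : ℝ) 1) :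
    TVaRContrib f (fun ω => (Y ω : ℝ)) κ ≤ TVaRContrib g (fun ω => (Y ω : ℝ)) κ := by
  have hn := Nat.isLeast_find (exists_le_measure_le_of_lt_one Y hκ.2)
  obtain ⟨hc₀, hc₁⟩ := atomWeight_mem_Icc hY hκ.1 hn
  rw [TVaRContrib_natCast_eq hf hY hκ.1 hn, TVaRContrib_natCast_eq hg hY hκ.1 hn]
  exact mul_le_mul_of_nonneg_left
    (add_le_add (mul_le_mul_of_nonneg_left (htail _) (sub_nonneg.2 hc₁))
      (mul_le_mul_of_nonneg_left (htail _) hc₀))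
    (one_div_nonneg.2 (sub_nonneg.2 hκ.2.le))

end NatValued

/-- if `E[X_v·1{Y ≥ k}] ≤ E[X_w·1{Y ≥ k}]` for every `k ∈ ℕ`, then
`C^TVaR_κ(X_v; Y) ≤ C^TVaR_κ(X_w; Y)` for every `κ ∈ [0, 1)`. -/
theorem tail_expectation_implies_tvar_contrib_le
    {Ω : Type*} [MeasureSpace Ω] [IsProbabilityMeasure (ℙ : Measure Ω)]
    (d : ℕ) (X : Fin d → Ω → ℕ)
    (hmeas : ∀ i, Measurable (X i))
    (hint : ∀ i, Integrable (fun ω => (X i ω : ℝ)) ℙ)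
    (v w : Fin d)
    (htail : ∀ k : ℕ,
      ∫ ω, (X v ω : ℝ) * (if k ≤ (∑ i, X i ω) then 1 else 0) ∂ℙ
        ≤ ∫ ω, (X w ω : ℝ) * (if k ≤ (∑ i, X i ω) then 1 else 0) ∂ℙ) :
    ∀ κ ∈ Set.Ico (0 : ℝ) 1,
      TVaRContrib (fun ω => (X v ω : ℝ)) (fun ω => ((∑ i, X i ω : ℕ) : ℝ)) κ
        ≤ TVaRContrib (fun ω => (X w ω : ℝ)) (fun ω => ((∑ i, X i ω : ℕ) : ℝ)) κ :=
  fun _ hκ => TVaRContrib_natCast_mono (hint v) (hint w)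
    (Finset.measurable_sum _ fun i _ => hmeas i) htail hκ

end
end

section
/- A concrete stochastic dominance between probability generating functions (second step in the star-to-series deconstruction): let α∈(0,1) and let d≥4 be an integer. Let X and Y be ℕ-valued random variables whose probability generating functions satisfy E[t^X]=t·(1−α+α·t·(1−α+α·t·(1−α+α·t)^{d−4})) and E[t^Y]=(1−α+α·t)^{d−4}·t·(1−α+α·t·(1−α+α·t)) for all t∈[0,1]. Then X⪯_st Y. -/
open MeasureTheory ProbabilityTheory
open scoped ENNReal Classical

noncomputable section

/-!
Write `u = 1 - α + α t` for the pgf of a Bernoulli(α) variable and `m = d - 4`. Both pgfs are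
polynomials, and `G_X - G_Y = (1 - α) t (1 + α t) (1 - u^m) = (1 - t) Q` with
`Q = α (1 - α) t (1 + α t) ∑_{j<m} u^j`, whose coefficients are nonnegative. The partial sums of
the coefficients of `(1 - t) Q` are the coefficients of `Q`, so the distribution function of `X`
dominates that of `Y`. The pgf on `(0, 1)` determines the law: a power series with summable
coefficients that vanishes on `(0, 1)` vanishes at `0` by continuity, and one peels off the
coefficients one at a time. It also forces `X` to be a.e. measurable, since otherwise `∫ t ^ X`
would be the junk value `0`.
-/

open Set Polynomial

section PowerSeries

variable {c : ℕ → ℝ}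

theorem norm_mul_pow_le {t : ℝ} (ht : t ∈ Icc 0 1) (n : ℕ) : ‖c n * t ^ n‖ ≤ |c n| := by
  rw [norm_mul, norm_pow, Real.norm_eq_abs, Real.norm_eq_abs, abs_of_nonneg ht.1]
  exact mul_le_of_le_one_right (abs_nonneg _) (pow_le_one₀ ht.1 ht.2)

theorem Summable.mul_pow_of_mem_Icc (hc : Summable c) {t : ℝ} (ht : t ∈ Icc 0 1) :
    Summable fun n => c n * t ^ n :=
  .of_norm_bounded hc.abs (norm_mul_pow_le ht)

theorem continuousOn_tsum_mul_pow (hc : Summable c) :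
    ContinuousOn (fun t : ℝ => ∑' n, c n * t ^ n) (Icc 0 1) :=
  continuousOn_tsum (fun n => (continuous_const.mul (continuous_pow n)).continuousOn)
    hc.abs fun n _ ht => norm_mul_pow_le ht n

theorem tsum_mul_zero_pow (c : ℕ → ℝ) : ∑' n, c n * (0 : ℝ) ^ n = c 0 := by
  rw [tsum_eq_single 0 fun n hn => by simp [hn]]
  simp

theorem tsum_mul_pow_eq_zero_add (hc : Summable c) {t : ℝ} (ht : t ∈ Icc 0 1) :
    ∑' n, c n * t ^ n = c 0 + t * ∑' n, c (n + 1) * t ^ n := by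
  rw [(hc.mul_pow_of_mem_Icc ht).tsum_eq_zero_add, ← tsum_mul_left]
  simp only [pow_zero, mul_one, pow_succ]
  refine congrArg _ (tsum_congr fun n => ?_)
  ring

theorem eq_zero_of_tsum_mul_pow_eq_zero (hc : Summable c)
    (h : ∀ t ∈ Ioo (0 : ℝ) 1, ∑' n, c n * t ^ n = 0) (n : ℕ) : c n = 0 := by
  have head : ∀ c : ℕ → ℝ, Summable c → (∀ t ∈ Ioo (0 : ℝ) 1, ∑' n, c n * t ^ n = 0) →
      c 0 = 0 := fun c hc h => by
    have hzero : EqOn (fun t : ℝ => ∑' n, c n * t ^ n) 0 (Icc 0 1) :=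
      EqOn.of_subset_closure h (continuousOn_tsum_mul_pow hc) continuousOn_const
        Ioo_subset_Icc_self (by rw [closure_Ioo zero_ne_one])
    simpa only [tsum_mul_zero_pow, Pi.zero_apply] using hzero (left_mem_Icc.2 zero_le_one)
  induction n generalizing c with
  | zero => exact head c hc h
  | succ n ih =>
    refine ih ((summable_nat_add_iff 1).2 hc) fun t ht => ?_
    have hsplit := tsum_mul_pow_eq_zero_add hc (Ioo_subset_Icc_self ht)
    rw [h t ht, head c hc h, zero_add, eq_comm, mul_eq_zero] at hsplit
    exact hsplit.resolve_left ht.1.ne'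

end PowerSeries

namespace Polynomial

theorem hasSum_coeff_mul_pow (p : ℝ[X]) (t : ℝ) :
    HasSum (fun n => p.coeff n * t ^ n) (p.eval t) := by
  rw [eval_eq_sum_range]
  exact hasSum_sum_of_ne_finset_zero fun n hn => by
    rw [coeff_eq_zero_of_natDegree_lt (by simpa using hn), zero_mul]

theorem exists_mem_Ioo_eval_ne_zero {p : ℝ[X]} (hp : p ≠ 0) :
    ∃ t ∈ Ioo (0 : ℝ) 1, p.eval t ≠ 0 := by
  by_contra! h
  exact hp (eq_zero_of_infinite_isRoot p ((Ioo_infinite zero_lt_one).mono h))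

theorem sum_range_coeff_one_sub_X_mul {R : Type*} [CommRing R] (q : R[X]) (k : ℕ) :
    ∑ n ∈ Finset.range (k + 1), ((1 - X) * q).coeff n = q.coeff k := by
  induction k with
  | zero => simp [sub_mul]
  | succ k ih =>
    rw [Finset.sum_range_succ, ih, sub_mul, one_mul, coeff_sub, coeff_X_mul]
    ring

end Polynomial

section Law

variable {Ω : Type*} [MeasurableSpace Ω] {μ : Measure Ω} {X : Ω → ℕ}

theorem aemeasurable_of_aemeasurable_pow {t : ℝ} (ht0 : 0 < t) (ht1 : t ≠ 1)
    (h : AEMeasurable (fun ω => t ^ X ω) μ) : AEMeasurable X μ :=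
  (measurable_from_nat.measurableEmbedding (pow_right_injective₀ ht0 ht1)).aemeasurable_comp_iff.1 h

theorem aemeasurable_of_integral_pow_eq_eval {p : ℝ[X]} (hp : p ≠ 0)
    (h : ∀ t ∈ Ioo (0 : ℝ) 1, ∫ ω, t ^ X ω ∂μ = p.eval t) : AEMeasurable X μ := by
  obtain ⟨t, ht, hpt⟩ := exists_mem_Ioo_eval_ne_zero hp
  have hint : Integrable (fun ω => t ^ X ω) μ := .of_integral_ne_zero (by rwa [h t ht])
  exact aemeasurable_of_aemeasurable_pow ht.1 ht.2.ne hint.aemeasurable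

theorem summable_measureReal_singleton (ν : Measure ℕ) [IsFiniteMeasure ν] :
    Summable fun n => ν.real {n} := by
  refine ENNReal.summable_toReal ?_
  have hsum := lintegral_countable' (μ := ν) 1
  simp only [Pi.one_apply, lintegral_one, one_mul] at hsum
  exact hsum ▸ measure_ne_top ν _

theorem hasSum_integral_pow [IsFiniteMeasure μ] (hX : AEMeasurable X μ) {t : ℝ}
    (ht : t ∈ Icc 0 1) : HasSum (fun n => (μ.map X).real {n} * t ^ n) (∫ ω, t ^ X ω ∂μ) := by
  have hsm : AEStronglyMeasurable (fun n : ℕ => t ^ n) (μ.map X) :=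
    measurable_from_nat.aestronglyMeasurable
  have hint : Integrable (fun n : ℕ => t ^ n) (μ.map X) := by
    refine .of_bound hsm 1 (ae_of_all _ fun n => ?_)
    rw [norm_pow, Real.norm_eq_abs, abs_of_nonneg ht.1]
    exact pow_le_one₀ ht.1 ht.2
  rw [← integral_map hX hsm, integral_countable hint]
  simp only [smul_eq_mul]
  exact ((summable_measureReal_singleton _).mul_pow_of_mem_Icc ht).hasSum

theorem map_real_singleton_eq_coeff_of_integral_pow_eq_eval [IsFiniteMeasure μ]
    (hX : AEMeasurable X μ) {p : ℝ[X]} (h : ∀ t ∈ Ioo (0 : ℝ) 1, ∫ ω, t ^ X ω ∂μ = p.eval t)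
    (n : ℕ) : (μ.map X).real {n} = p.coeff n := by
  have hc : Summable fun n => (μ.map X).real {n} - p.coeff n :=
    (summable_measureReal_singleton _).sub (by simpa using (p.hasSum_coeff_mul_pow 1).summable)
  refine sub_eq_zero.1 (eq_zero_of_tsum_mul_pow_eq_zero hc (fun t ht => ?_) n)
  simp_rw [sub_mul]
  rw [((hasSum_integral_pow hX (Ioo_subset_Icc_self ht)).sub (p.hasSum_coeff_mul_pow t)).tsum_eq,
    h t ht, sub_self]

theorem measure_lt_eq_one_sub_map_range [IsProbabilityMeasure μ] (hX : AEMeasurable X μ)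
    (k : ℕ) : μ {ω | k < X ω} = 1 - μ.map X (Finset.range (k + 1)) := by
  have : IsProbabilityMeasure (μ.map X) := Measure.isProbabilityMeasure_map hX
  have hset : {ω | k < X ω} = X ⁻¹' (Finset.range (k + 1) : Set ℕ)ᶜ := by
    ext ω
    simp
  rw [hset, ← Measure.map_apply_of_aemeasurable hX (by measurability),
    prob_compl_eq_one_sub (by measurability)]

end Law

section StochasticOrder

variable {Ω Ω' : Type*} [MeasureSpace Ω] [MeasureSpace Ω']
  [IsProbabilityMeasure (ℙ : Measure Ω)] [IsProbabilityMeasure (ℙ : Measure Ω')]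
  {X : Ω → ℕ} {Y : Ω' → ℕ}

theorem stochLE_of_sum_range_le (hX : AEMeasurable X ℙ) (hY : AEMeasurable Y ℙ)
    (h : ∀ k, ∑ n ∈ Finset.range (k + 1), ((ℙ : Measure Ω').map Y).real {n} ≤
      ∑ n ∈ Finset.range (k + 1), ((ℙ : Measure Ω).map X).real {n}) :
    StochLE X Y := by
  intro k
  rw [measure_lt_eq_one_sub_map_range hX, measure_lt_eq_one_sub_map_range hY]
  have hcdf := h k
  rw [sum_measureReal_singleton, sum_measureReal_singleton] at hcdf
  exact tsub_le_tsub_left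
    ((ENNReal.toReal_le_toReal (measure_ne_top _ _) (measure_ne_top _ _)).1 hcdf) 1

theorem stochLE_of_integral_pow_eq_eval {p q : ℝ[X]} (hp : p ≠ 0) (hq : q ≠ 0)
    (hX : ∀ t ∈ Ioo (0 : ℝ) 1, ∫ ω, t ^ X ω ∂ℙ = p.eval t)
    (hY : ∀ t ∈ Ioo (0 : ℝ) 1, ∫ ω, t ^ Y ω ∂ℙ = q.eval t)
    (hpq : ∀ k, ∑ n ∈ Finset.range (k + 1), q.coeff n ≤ ∑ n ∈ Finset.range (k + 1), p.coeff n) :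
    StochLE X Y := by
  have hmX := aemeasurable_of_integral_pow_eq_eval hp hX
  have hmY := aemeasurable_of_integral_pow_eq_eval hq hY
  refine stochLE_of_sum_range_le hmX hmY fun k => ?_
  simpa only [map_real_singleton_eq_coeff_of_integral_pow_eq_eval hmX hX,
    map_real_singleton_eq_coeff_of_integral_pow_eq_eval hmY hY] using hpq k

end StochasticOrder

namespace Polynomial

def bernoulliPGF (a : ℝ) : ℝ[X] := C (1 - a) + C a * X

@[simp]
theorem eval_bernoulliPGF (a t : ℝ) : (bernoulliPGF a).eval t = 1 - a + a * t := by
  simp [bernoulliPGF]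

theorem X_mul_sub_bernoulliPGF_pow_mul (a : ℝ) (m : ℕ) :
    X * (C (1 - a) + C a * X * (C (1 - a) + C a * X * bernoulliPGF a ^ m)) -
        bernoulliPGF a ^ m * (X * (C (1 - a) + C a * X * bernoulliPGF a)) =
      (1 - X) * (C a * C (1 - a) * X * (1 + C a * X) *
        ∑ j ∈ Finset.range m, bernoulliPGF a ^ j) := by
  set b : ℝ[X] := C (1 - a) with hb
  set u := bernoulliPGF a
  have hu : u = b + C a * X := rfl
  have hb' : b = 1 - C a := by simp [hb]
  linear_combination (-b * X * (1 + C a * X)) * mul_neg_geom_sum u m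
    + (-b * X * (1 + C a * X) * ∑ j ∈ Finset.range m, u ^ j - C a * X ^ 2 * u ^ m) * hu
    - b * X * (1 + C a * X) * (∑ j ∈ Finset.range m, u ^ j) * hb'

theorem coeff_mul_sum_bernoulliPGF_pow_nonneg {a : ℝ} (ha0 : 0 ≤ a) (ha1 : a ≤ 1) (m k : ℕ) :
    0 ≤ (C a * C (1 - a) * X * (1 + C a * X) *
      ∑ j ∈ Finset.range m, bernoulliPGF a ^ j).coeff k := by
  lift a to NNReal using ha0
  have hmap : C (a : ℝ) * C (1 - (a : ℝ)) * X * (1 + C (a : ℝ) * X) *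
      ∑ j ∈ Finset.range m, bernoulliPGF a ^ j =
      (C a * C (1 - a) * X * (1 + C a * X) *
        ∑ j ∈ Finset.range m, (C (1 - a) + C a * X) ^ j).map NNReal.toRealHom := by
    simp [Polynomial.map_sum, bernoulliPGF, NNReal.coe_sub (show a ≤ 1 from ha1)]
  rw [hmap, coeff_map]
  exact NNReal.coe_nonneg _

theorem sum_range_coeff_bernoulliPGF_pow_mul_le {a : ℝ} (ha0 : 0 ≤ a) (ha1 : a ≤ 1)
    (m k : ℕ) :
    ∑ n ∈ Finset.range (k + 1),
        (bernoulliPGF a ^ m * (X * (C (1 - a) + C a * X * bernoulliPGF a))).coeff n ≤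
      ∑ n ∈ Finset.range (k + 1),
        (X * (C (1 - a) + C a * X * (C (1 - a) + C a * X * bernoulliPGF a ^ m))).coeff n := by
  rw [← sub_nonneg, ← Finset.sum_sub_distrib]
  simp_rw [← coeff_sub]
  rw [X_mul_sub_bernoulliPGF_pow_mul, sum_range_coeff_one_sub_X_mul]
  exact coeff_mul_sum_bernoulliPGF_pow_nonneg ha0 ha1 m k

end Polynomial

theorem pgf_dominance_star_to_series_second_step_general
    {Ω Ω' : Type*}
    [MeasureSpace Ω] [IsProbabilityMeasure (ℙ : Measure Ω)]
    [MeasureSpace Ω'] [IsProbabilityMeasure (ℙ : Measure Ω')]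
    (α : ℝ) (hα : α ∈ Set.Ioo (0 : ℝ) 1)
    (d : ℕ)
    (X : Ω → ℕ) (Y : Ω' → ℕ)
    (hX : ∀ t ∈ Set.Icc (0 : ℝ) 1,
      ∫ ω, t ^ X ω ∂ℙ = t * (1 - α + α * t * (1 - α + α * t * (1 - α + α * t) ^ (d - 4))))
    (hY : ∀ t ∈ Set.Icc (0 : ℝ) 1,
      ∫ ω, t ^ Y ω ∂ℙ = (1 - α + α * t) ^ (d - 4) * (t * (1 - α + α * t * (1 - α + α * t)))) :
    StochLE X Y := by
  refine stochLE_of_integral_pow_eq_eval ?_ ?_ (fun t ht => ?_) (fun t ht => ?_)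
    (sum_range_coeff_bernoulliPGF_pow_mul_le hα.1.le hα.2.le (d - 4))
  · exact fun h => by simpa using congrArg (eval 1) h
  · exact fun h => by simpa using congrArg (eval 1) h
  · simp [hX t (Ioo_subset_Icc_self ht)]
  · simp [hY t (Ioo_subset_Icc_self ht)]

/-- a concrete stochastic dominance between pgf's (second step in the
star-to-series deconstruction). -/
theorem pgf_dominance_star_to_series_second_step
    {Ω Ω' : Type*}
    [MeasureSpace Ω] [IsProbabilityMeasure (ℙ : Measure Ω)]
    [MeasureSpace Ω'] [IsProbabilityMeasure (ℙ : Measure Ω')]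
    (α : ℝ) (hα : α ∈ Set.Ioo (0 : ℝ) 1)
    (d : ℕ) (hd : 4 ≤ d)
    (X : Ω → ℕ) (Y : Ω' → ℕ)
    (hX : ∀ t ∈ Set.Icc (0 : ℝ) 1,
      ∫ ω, t ^ X ω ∂ℙ = t * (1 - α + α * t * (1 - α + α * t * (1 - α + α * t) ^ (d - 4))))
    (hY : ∀ t ∈ Set.Icc (0 : ℝ) 1,
      ∫ ω, t ^ Y ω ∂ℙ = (1 - α + α * t) ^ (d - 4) * (t * (1 - α + α * t * (1 - α + α * t)))) :
    StochLE X Y :=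
  pgf_dominance_star_to_series_second_step_general α hα d X Y hX hY

end
end

section
/- General pgf-composition stochastic dominance: let α∈(0,1) and k≥1. Define ψ(y,t)=t·(1−α+α·y) and let ψ^{k}(y,t) denote the k-fold composition of ψ in its first argument (ψ^{1}(y,t)=ψ(y,t) and ψ^{k}(y,t)=ψ(ψ^{k−1}(y,t),t)). Let Z be an ℕ-valued random variable with probability generating function P_Z(t)=E[t^Z]. If X and Y are ℕ-valued random variables with E[t^X]=ψ^{k}(t·P_Z(t),t) and E[t^Y]=ψ^{k}(t,t)·P_Z(t) for all t∈[0,1], then X⪯_st Y. -/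
open MeasureTheory ProbabilityTheory
open scoped ENNReal Classical

noncomputable section

/-- `psiIter α k y t` is the `k`-fold composition (in the first argument `y`) of
`ψ(y, t) = t · (1 - α + α · y)`. -/
def psiIter (α : ℝ) : ℕ → ℝ → ℝ → ℝ
  | 0, y, _ => y
  | k + 1, y, t => t * (1 - α + α * psiIter α k y t)

/-!
Read on laws instead of generating functions, `ψ(·, t)` is the transform
`Ψ ν = δ₁ ∗ ((1 - α) δ₀ + α ν)` of measures on `ℕ`, and a product of generating functions is a
convolution. Since generating functions on `(0, 1)` determine laws on `ℕ` (identity theorem for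
power series), `X` has law `Ψ^k (δ₁ ∗ μ)` and `Y` has law `Ψ^k δ₁ ∗ μ`, where `μ` is the law of `Z`.
Now `δ₀` lies stochastically below every probability measure, so `Ψ (ν ∗ μ) ≤st Ψ ν ∗ μ`, and `Ψ`
is monotone for `≤st`; induction on `k` gives `Ψ^k (ν ∗ μ) ≤st Ψ^k ν ∗ μ`.
-/

open scoped NNReal Topology

open FormalMultilinearSeries in
lemma hasFPowerSeriesAt_tsum_mul_pow {a : ℕ → ℝ} {C : ℝ} (ha : ∀ n, |a n| ≤ C) :
    HasFPowerSeriesAt (fun t => ∑' n, a n * t ^ n) (ofScalars ℝ a) 0 := by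
  have hrad : ((1 : ℝ≥0) : ℝ≥0∞) ≤ (ofScalars ℝ a).radius :=
    (ofScalars ℝ a).le_radius_of_bound C fun n => by simpa [ofScalars_norm] using ha n
  have := ((ofScalars ℝ a).hasFPowerSeriesOnBall (lt_of_lt_of_le (by simp) hrad)).hasFPowerSeriesAt
  simpa [← ofScalarsSum.eq_1, ofScalarsSum_eq_tsum] using this

lemma eq_of_tsum_mul_pow_eqOn {a b : ℕ → ℝ} {Ca Cb : ℝ} (ha : ∀ n, |a n| ≤ Ca)
    (hb : ∀ n, |b n| ≤ Cb)
    (h : Set.EqOn (fun t => ∑' n, a n * t ^ n) (fun t => ∑' n, b n * t ^ n) (Set.Ioo 0 1)) :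
    a = b := by
  have hfa := hasFPowerSeriesAt_tsum_mul_pow ha
  have hfb := hasFPowerSeriesAt_tsum_mul_pow hb
  have hfreq : ∃ᶠ t in 𝓝[≠] (0 : ℝ), ∑' n, a n * t ^ n = ∑' n, b n * t ^ n :=
    (Filter.Eventually.frequently (Filter.mem_of_superset (Ioo_mem_nhdsGT one_pos) h)).filter_mono
      (nhdsWithin_mono _ fun t ht => ne_of_gt ht)
  exact FormalMultilinearSeries.ofScalars_series_injective ℝ ℝ
    (hfa.eq_formalMultilinearSeries_of_eventually hfb
      ((hfa.analyticAt.frequently_eq_iff_eventually_eq hfb.analyticAt).1 hfreq))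

lemma MeasurableEmbedding.of_injective_of_countable {α β : Type*} [Countable α]
    [MeasurableSpace α] [DiscreteMeasurableSpace α] [MeasurableSpace β]
    [MeasurableSingletonClass β] {f : α → β} (hf : Function.Injective f) :
    MeasurableEmbedding f :=
  ⟨hf, .of_discrete, fun s _ => (s.to_countable.image f).measurableSet⟩

namespace MeasureTheory.Measure

section StochasticOrder

variable {M : Type*} [MeasurableSpace M] [Preorder M]

def StochLE (μ ν : Measure M) : Prop :=
  ∀ s, MeasurableSet s → IsUpperSet s → μ s ≤ ν s

namespace StochLE

variable {μ ν ρ μ' ν' : Measure M}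

lemma refl (μ : Measure M) : μ.StochLE μ := fun _ _ _ => le_rfl

lemma trans (h : μ.StochLE ν) (h' : ν.StochLE ρ) : μ.StochLE ρ :=
  fun s hs hu => (h s hs hu).trans (h' s hs hu)

lemma add (h : μ.StochLE ν) (h' : μ'.StochLE ν') : (μ + μ').StochLE (ν + ν') :=
  fun s hs hu => add_le_add (h s hs hu) (h' s hs hu)

lemma smul (c : ℝ≥0) (h : μ.StochLE ν) : (c • μ).StochLE (c • ν) :=
  fun s hs hu => by simpa using mul_le_mul_right (h s hs hu) (c : ℝ≥0∞)

lemma map {N : Type*} [MeasurableSpace N] [Preorder N] {f : M → N} (hf : Measurable f)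
    (hf_mono : Monotone f) (h : μ.StochLE ν) : (μ.map f).StochLE (ν.map f) := by
  intro s hs hu
  rw [map_apply hf hs, map_apply hf hs]
  exact h _ (hf hs) (hu.preimage hf_mono)

lemma dirac_conv [AddMonoid M] [AddLeftMono M] [MeasurableAdd₂ M] [SFinite μ] [SFinite ν]
    (x : M) (h : μ.StochLE ν) : (dirac x ∗ μ).StochLE (dirac x ∗ ν) := by
  rw [Measure.dirac_conv, Measure.dirac_conv]
  exact h.map (by fun_prop) (monotone_id.const_add x)

end StochLE

lemma dirac_bot_stochLE [OrderBot M] (μ : Measure M) [IsProbabilityMeasure μ] :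
    (dirac ⊥ : Measure M).StochLE μ := by
  intro s hs hu
  by_cases hbot : ⊥ ∈ s
  · rw [Set.eq_univ_of_forall fun x => hu bot_le hbot]
    simp
  · simp [dirac_apply' _ hs, hbot]

end StochasticOrder

section GeneratingFunction

def pgf (μ : Measure ℕ) (t : ℝ) : ℝ := ∫ n, t ^ n ∂μ

variable {μ ν : Measure ℕ} {t : ℝ}

lemma integrable_pow [IsFiniteMeasure μ] (ht : |t| ≤ 1) : Integrable (fun n : ℕ => t ^ n) μ :=
  .of_bound .of_discrete 1 <| .of_forall fun n => by
    simpa [abs_pow] using pow_le_one₀ (abs_nonneg t) ht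

@[simp]
lemma pgf_zero (t : ℝ) : (0 : Measure ℕ).pgf t = 0 := by simp [pgf]

lemma isProbabilityMeasure_iff_pgf_one [IsFiniteMeasure μ] :
    IsProbabilityMeasure μ ↔ μ.pgf 1 = 1 := by
  simp [isProbabilityMeasure_iff, pgf, measureReal_def, ENNReal.toReal_eq_one_iff]

lemma pgf_dirac (m : ℕ) (t : ℝ) : (dirac m).pgf t = t ^ m := by simp [pgf]

lemma pgf_add [IsFiniteMeasure μ] [IsFiniteMeasure ν] (ht : |t| ≤ 1) :
    (μ + ν).pgf t = μ.pgf t + ν.pgf t :=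
  integral_add_measure (integrable_pow ht) (integrable_pow ht)

lemma pgf_smul (c : ℝ≥0) (μ : Measure ℕ) (t : ℝ) : (c • μ).pgf t = c * μ.pgf t :=
  integral_smul_nnreal_measure _ c

lemma pgf_conv [IsFiniteMeasure μ] [IsFiniteMeasure ν] (ht : |t| ≤ 1) :
    (μ ∗ ν).pgf t = μ.pgf t * ν.pgf t := by
  simp only [pgf, integral_conv (integrable_pow ht), pow_add, integral_const_mul,
    integral_mul_const]

lemma pgf_eq_tsum [IsFiniteMeasure μ] (ht : |t| ≤ 1) :
    μ.pgf t = ∑' n, μ.real {n} * t ^ n :=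
  integral_countable (integrable_pow ht)

lemma ext_of_pgf_eqOn [IsFiniteMeasure μ] [IsFiniteMeasure ν]
    (h : Set.EqOn μ.pgf ν.pgf (Set.Ioo 0 1)) : μ = ν := by
  have hbound : ∀ (ρ : Measure ℕ) [IsFiniteMeasure ρ] (n : ℕ), |ρ.real {n}| ≤ ρ.real Set.univ :=
    fun ρ _ n => (abs_of_nonneg measureReal_nonneg).trans_le (measureReal_mono (Set.subset_univ _))
  have hcoeff := eq_of_tsum_mul_pow_eqOn (hbound μ) (hbound ν) fun t ht => by
    have ht' : |t| ≤ 1 := abs_le.2 ⟨by linarith [ht.1], ht.2.le⟩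
    simpa only [← pgf_eq_tsum ht'] using h ht
  refine ext_of_singleton fun n => ?_
  exact (ENNReal.toReal_eq_toReal_iff' (measure_ne_top _ _) (measure_ne_top _ _)).1
    (congrFun hcoeff n)

end GeneratingFunction

end MeasureTheory.Measure

/-- If `W` is not a.e.-measurable, both sides are the junk value `0`. -/
lemma MeasureTheory.integral_pow_eq_pgf_map {Ω : Type*} [MeasurableSpace Ω] (P : Measure Ω)
    (W : Ω → ℕ) {t : ℝ} (ht₀ : 0 < t) (ht₁ : t ≠ 1) :
    ∫ ω, t ^ W ω ∂P = (P.map W).pgf t := by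
  by_cases hW : AEMeasurable W P
  · exact (integral_map hW
      (Measurable.of_discrete (f := fun n : ℕ => t ^ n)).aestronglyMeasurable).symm
  · rw [Measure.map_of_not_aemeasurable hW, Measure.pgf_zero]
    refine integral_non_aestronglyMeasurable fun h => hW ?_
    exact (MeasurableEmbedding.of_injective_of_countable
      (pow_right_injective₀ ht₀ ht₁)).aemeasurable_comp_iff.1 h.aemeasurable

lemma ProbabilityTheory.hasLaw_of_pgf_eqOn {Ω : Type*} [MeasurableSpace Ω] {P : Measure Ω}
    [IsFiniteMeasure P] {W : Ω → ℕ} {ν : Measure ℕ} [IsFiniteMeasure ν] (hν : ν ≠ 0)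
    (h : ∀ t ∈ Set.Ioo (0 : ℝ) 1, ∫ ω, t ^ W ω ∂P = ν.pgf t) : HasLaw W ν P := by
  have hmap : P.map W = ν := Measure.ext_of_pgf_eqOn fun t ht =>
    (integral_pow_eq_pgf_map P W ht.1 ht.2.ne).symm.trans (h t ht)
  refine ⟨?_, hmap⟩
  by_contra hW
  exact hν (hmap ▸ Measure.map_of_not_aemeasurable hW)

lemma psiIter_one_one (a : ℝ) (k : ℕ) : psiIter a k 1 1 = 1 := by
  induction k with
  | zero => rfl
  | succ k ih => rw [psiIter, ih]; ring

lemma psiIter_one_eq_one_iff {a : ℝ} (ha : a ≠ 0) (k : ℕ) (y : ℝ) :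
    psiIter a k y 1 = 1 ↔ y = 1 := by
  induction k with
  | zero => rfl
  | succ k ih =>
    rw [psiIter, ← ih, one_mul]
    constructor <;> intro h
    · exact mul_left_cancel₀ ha (by linarith : a * psiIter a k y 1 = a * 1)
    · rw [h]; ring

section Psi

open Measure

variable {a t : ℝ} {ν : Measure ℕ}

/-- The law of `1 + B · V` with `B ~ Bernoulli a` independent of `V ~ ν`. -/
def psiMeasure (a : ℝ) (ν : Measure ℕ) : Measure ℕ :=
  dirac 1 ∗ ((1 - a).toNNReal • dirac 0 + a.toNNReal • ν)

instance [IsFiniteMeasure ν] : IsFiniteMeasure (psiMeasure a ν) := by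
  unfold psiMeasure; infer_instance

instance isFiniteMeasure_iterate_psiMeasure (k : ℕ) [IsFiniteMeasure ν] :
    IsFiniteMeasure ((psiMeasure a)^[k] ν) := by
  induction k with
  | zero => assumption
  | succ k ih => rw [Function.iterate_succ_apply']; infer_instance

lemma pgf_psiMeasure (ha₀ : 0 ≤ a) (ha₁ : a ≤ 1) [IsFiniteMeasure ν] (ht : |t| ≤ 1) :
    (psiMeasure a ν).pgf t = t * (1 - a + a * ν.pgf t) := by
  rw [psiMeasure, pgf_conv ht, pgf_add ht, pgf_smul, pgf_smul, pgf_dirac, pgf_dirac,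
    Real.coe_toNNReal _ (sub_nonneg.2 ha₁), Real.coe_toNNReal _ ha₀, pow_one, pow_zero, mul_one]

lemma pgf_iterate_psiMeasure (ha₀ : 0 ≤ a) (ha₁ : a ≤ 1) (k : ℕ) [IsFiniteMeasure ν]
    (ht : |t| ≤ 1) : ((psiMeasure a)^[k] ν).pgf t = psiIter a k (ν.pgf t) t := by
  induction k with
  | zero => rfl
  | succ k ih => rw [Function.iterate_succ_apply', pgf_psiMeasure ha₀ ha₁ ht, ih, psiIter]

lemma isProbabilityMeasure_iterate_psiMeasure (ha₀ : 0 ≤ a) (ha₁ : a ≤ 1) (k : ℕ)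
    [IsProbabilityMeasure ν] : IsProbabilityMeasure ((psiMeasure a)^[k] ν) := by
  rw [isProbabilityMeasure_iff_pgf_one, pgf_iterate_psiMeasure ha₀ ha₁ k (by simp),
    isProbabilityMeasure_iff_pgf_one.1 ‹_›, psiIter_one_one]

lemma iterate_psiMeasure_ne_zero (ha : a < 1) {k : ℕ} (hk : k ≠ 0) (ν : Measure ℕ)
    [IsFiniteMeasure ν] : (psiMeasure a)^[k] ν ≠ 0 := by
  obtain ⟨j, rfl⟩ := Nat.exists_eq_succ_of_ne_zero hk
  rw [Function.iterate_succ_apply', psiMeasure, dirac_conv, Ne,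
    Measure.map_eq_zero_iff (by fun_prop)]
  intro h
  simpa [ha.not_ge] using congrArg (fun μ : Measure ℕ => μ {0}) h

lemma psiMeasure_mono {ν ν' : Measure ℕ} [SFinite ν] [SFinite ν'] (h : ν.StochLE ν') :
    (psiMeasure a ν).StochLE (psiMeasure a ν') :=
  StochLE.dirac_conv 1 ((StochLE.refl _).add (h.smul _))

lemma psiMeasure_conv_stochLE (ν μ : Measure ℕ) [SFinite ν] [IsProbabilityMeasure μ] :
    (psiMeasure a (ν ∗ μ)).StochLE (psiMeasure a ν ∗ μ) := by
  have hassoc :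
      psiMeasure a ν ∗ μ = dirac 1 ∗ ((1 - a).toNNReal • μ + a.toNNReal • (ν ∗ μ)) := by
    rw [psiMeasure, conv_assoc, add_conv, ← coe_nnreal_smul, ← coe_nnreal_smul, conv_smul_left,
      conv_smul_left, dirac_zero_conv]
    rfl
  rw [hassoc]
  exact StochLE.dirac_conv 1 (((dirac_bot_stochLE μ).smul _).add (StochLE.refl _))

lemma iterate_psiMeasure_conv_stochLE (k : ℕ) (ν μ : Measure ℕ) [IsFiniteMeasure ν]
    [IsProbabilityMeasure μ] :
    ((psiMeasure a)^[k] (ν ∗ μ)).StochLE ((psiMeasure a)^[k] ν ∗ μ) := by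
  induction k with
  | zero => exact StochLE.refl _
  | succ k ih =>
    rw [Function.iterate_succ_apply', Function.iterate_succ_apply']
    exact (psiMeasure_mono ih).trans (psiMeasure_conv_stochLE _ μ)

end Psi

/-- general pgf-composition stochastic dominance:
if `E[t^X] = ψ^{k}(t·P_Z(t), t)` and `E[t^Y] = ψ^{k}(t, t) · P_Z(t)`, then `X ⪯_st Y`. -/
theorem pgf_composition_dominance
    {Ω Ω' Ω'' : Type*}
    [MeasureSpace Ω] [IsProbabilityMeasure (ℙ : Measure Ω)]
    [MeasureSpace Ω'] [IsProbabilityMeasure (ℙ : Measure Ω')]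
    [MeasureSpace Ω''] [IsProbabilityMeasure (ℙ : Measure Ω'')]
    (α : ℝ) (hα : α ∈ Set.Ioo (0 : ℝ) 1)
    (k : ℕ) (hk : 1 ≤ k)
    (Z : Ω'' → ℕ) (PZ : ℝ → ℝ)
    (hZ : ∀ t ∈ Set.Icc (0 : ℝ) 1, ∫ ω, t ^ Z ω ∂ℙ = PZ t)
    (X : Ω → ℕ) (Y : Ω' → ℕ)
    (hX : ∀ t ∈ Set.Icc (0 : ℝ) 1, ∫ ω, t ^ X ω ∂ℙ = psiIter α k (t * PZ t) t)
    (hY : ∀ t ∈ Set.Icc (0 : ℝ) 1, ∫ ω, t ^ Y ω ∂ℙ = psiIter α k t t * PZ t) :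
    StochLE X Y := by
  obtain ⟨hα₀, hα₁⟩ := hα
  have habs : ∀ t ∈ Set.Ioo (0 : ℝ) 1, |t| ≤ 1 := fun t ht =>
    abs_le.2 ⟨by linarith [ht.1], ht.2.le⟩
  set μZ := (ℙ : Measure Ω'').map Z
  have hPZ : ∀ t ∈ Set.Ioo (0 : ℝ) 1, PZ t = μZ.pgf t := fun t ht =>
    (hZ t (Set.Ioo_subset_Icc_self ht)).symm.trans (integral_pow_eq_pgf_map _ Z ht.1 ht.2.ne)
  have hshift : ∀ t, |t| ≤ 1 → (Measure.dirac 1 ∗ μZ).pgf t = t * μZ.pgf t := fun t ht => by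
    rw [Measure.pgf_conv ht, Measure.pgf_dirac, pow_one]
  have hXlaw : HasLaw X ((psiMeasure α)^[k] (Measure.dirac 1 ∗ μZ)) ℙ :=
    hasLaw_of_pgf_eqOn (iterate_psiMeasure_ne_zero hα₁ (by omega) _) fun t ht => by
      rw [hX t (Set.Ioo_subset_Icc_self ht), pgf_iterate_psiMeasure hα₀.le hα₁.le k (habs t ht),
        hshift t (habs t ht), hPZ t ht]
  -- Comparing total masses (generating functions at `t = 1`) shows that `Z` is a.e.-measurable.
  have : IsProbabilityMeasure μZ := by
    have h1 := Measure.isProbabilityMeasure_iff_pgf_one.1 (hXlaw.isProbabilityMeasure_iff.1 ‹_›)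
    rwa [pgf_iterate_psiMeasure hα₀.le hα₁.le k (by simp), hshift 1 (by simp), one_mul,
      psiIter_one_eq_one_iff hα₀.ne', ← Measure.isProbabilityMeasure_iff_pgf_one] at h1
  have := isProbabilityMeasure_iterate_psiMeasure hα₀.le hα₁.le k (ν := Measure.dirac 1)
  have hYlaw : HasLaw Y ((psiMeasure α)^[k] (Measure.dirac 1) ∗ μZ) ℙ :=
    hasLaw_of_pgf_eqOn (IsProbabilityMeasure.ne_zero _) fun t ht => by
      rw [hY t (Set.Ioo_subset_Icc_self ht), Measure.pgf_conv (habs t ht),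
        pgf_iterate_psiMeasure hα₀.le hα₁.le k (habs t ht), Measure.pgf_dirac, pow_one, hPZ t ht]
  intro n
  rw [hXlaw.measure_eq .of_discrete, hYlaw.measure_eq .of_discrete]
  exact iterate_psiMeasure_conv_stochLE k _ μZ _ .of_discrete fun _ _ hle hlt => hlt.trans_le hle

end
end

section
/- Bivariate supermodular ordering from stochastic dominance (key construction in the proof of the synecdochic-pair ordering theorem): let a=(a_k)_{k∈ℕ} and b=(b_k)_{k∈ℕ} be probability mass functions on ℕ such that ∑_{j=0}^{k}a_j≥∑_{j=0}^{k}b_j for all k∈ℕ (i.e., the law with pmf a precedes the law with pmf b in the usual stochastic order). Set r=∑_{k∈ℕ}max(b_k−a_k,0), which also equals ∑_{k∈ℕ}max(a_k−b_k,0). Let (I,H) and (I′,H′) be random pairs with values in {0,1}×ℕ whose joint laws are P(I=1,H=k)=a_k/(1+r), P(I=0,H=k)=max(b_k−a_k,0)/(1+r), and P(I′=1,H′=k)=b_k/(1+r), P(I′=0,H′=k)=max(a_k−b_k,0)/(1+r) for k∈ℕ (these are valid probability mass functions). Then (I,H)⪯_sm(I′,H′). -/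
/-!
Both expectations are explicit series over `{0, 1} × ℕ`. With `p = (a - b)⁺` and `q = (b - a)⁺`,
so that `b - a = q - p`, the difference of the two expectations is `∑ g k (q k - p k) / (1 + r)`
where `g k = ζ (1, k) - ζ (0, k)` is nondecreasing by supermodularity. The sequences `p` and `q`
have the same mass `r` and the partial sums of `q` are dominated by those of `p`; writing
`g k - g 0` as the sum of the increments of `g` below `k` and exchanging the two summations (in
`ℝ≥0∞`, where this needs no summability) gives `∑ g p ≤ ∑ g q`.

`I` and `H` are not assumed measurable, but the prescribed masses of the disjoint level sets
`{I = i ∧ H = k}` add up to `1`, which forces each of them to be null measurable.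
-/

open MeasureTheory ProbabilityTheory
open scoped ENNReal Classical

noncomputable section

open Finset

theorem Supermodular.sub_le_sub {ζ : ℝ × ℝ → ℝ} (hζ : Supermodular ζ) {x x' y y' : ℝ}
    (hx : x ≤ x') (hy : y ≤ y') : ζ (x', y) - ζ (x, y) ≤ ζ (x', y') - ζ (x, y') := by
  have h := hζ (x', y) (x, y')
  rw [Prod.mk_inf_mk, Prod.mk_sup_mk, inf_eq_right.2 hx, inf_eq_left.2 hy, sup_eq_left.2 hx,
    sup_eq_right.2 hy] at h
  linarith

theorem summable_max_sub_zero {ι : Type*} {a b : ι → ℝ} (ha : Summable a) (hb : Summable b) :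
    Summable fun k => max (a k - b k) 0 :=
  (ha.sub hb).abs.of_nonneg_of_le (fun _ => le_max_right _ _)
    fun _ => max_le (le_abs_self _) (abs_nonneg _)

theorem tsum_max_sub_zero_comm {ι : Type*} {a b : ι → ℝ} (ha : Summable a) (hb : Summable b)
    (hab : ∑' k, a k = ∑' k, b k) :
    ∑' k, max (a k - b k) 0 = ∑' k, max (b k - a k) 0 := by
  have h := (summable_max_sub_zero ha hb).tsum_sub (summable_max_sub_zero hb ha)
  have h' : ∀ k, max (a k - b k) 0 - max (b k - a k) 0 = a k - b k := fun k => by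
    simpa only [neg_sub] using max_zero_sub_max_neg_zero_eq_self (a k - b k)
  rw [tsum_congr h', ha.tsum_sub hb, hab, sub_self] at h
  linarith

theorem ENNReal.tsum_mul_sum_range_le_of_sum_range_le {P Q : ℕ → ℝ≥0∞} (e : ℕ → ℝ≥0∞)
    (htot : ∑' k, P k = ∑' k, Q k) (hfin : ∑' k, P k ≠ ∞)
    (hhead : ∀ i, ∑ k ∈ range (i + 1), Q k ≤ ∑ k ∈ range (i + 1), P k) :
    ∑' k, P k * ∑ i ∈ range k, e i ≤ ∑' k, Q k * ∑ i ∈ range k, e i := by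
  set tail : (ℕ → ℝ≥0∞) → ℕ → ℝ≥0∞ := fun R i => ∑' k, (↑(range (i + 1)) : Set ℕ)ᶜ.indicator R k
  have hsplit : ∀ R i, ∑ k ∈ range (i + 1), R k + tail R i = ∑' k, R k := fun R i => by
    rw [sum_eq_tsum_indicator, ← ENNReal.tsum_add]
    exact tsum_congr fun k => Set.indicator_self_add_compl_apply _ _ _
  have hswap : ∀ R, ∑' k, R k * ∑ i ∈ range k, e i = ∑' i, e i * tail R i := fun R => by
    simp only [tail, ← ENNReal.tsum_mul_left]
    rw [← ENNReal.tsum_comm]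
    refine tsum_congr fun k => ?_
    rw [sum_eq_tsum_indicator, ← ENNReal.tsum_mul_left]
    refine tsum_congr fun i => ?_
    by_cases h : i < k <;> simp [Set.indicator, h, mul_comm]
  have htail : ∀ i, tail P i ≤ tail Q i := fun i => by
    have hP : ∑ k ∈ range (i + 1), P k ≠ ∞ := ne_top_of_le_ne_top hfin (hsplit P i ▸ le_self_add)
    refine ENNReal.le_of_add_le_add_left hP ?_
    rw [hsplit, htot, ← hsplit Q i]
    exact add_le_add_left (hhead i) _
  rw [hswap, hswap]
  exact ENNReal.tsum_le_tsum fun i => mul_le_mul_right (htail i) _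

theorem tsum_mul_le_tsum_mul_of_monotone {p q g : ℕ → ℝ} (hp : 0 ≤ p) (hq : 0 ≤ q)
    (hps : Summable p) (hqs : Summable q) (htot : ∑' k, p k = ∑' k, q k)
    (hhead : ∀ i, ∑ k ∈ range (i + 1), q k ≤ ∑ k ∈ range (i + 1), p k) (hg : Monotone g)
    (hgp : Summable fun k => g k * p k) (hgq : Summable fun k => g k * q k) :
    ∑' k, g k * p k ≤ ∑' k, g k * q k := by
  have hnonneg : ∀ r : ℕ → ℝ, 0 ≤ r → ∀ k, 0 ≤ (g k - g 0) * r k := fun r hr k =>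
    mul_nonneg (sub_nonneg.2 (hg k.zero_le)) (hr k)
  have hsummable : ∀ r : ℕ → ℝ, Summable r → Summable (fun k => g k * r k) →
      Summable fun k => (g k - g 0) * r k := fun r hrs hgr =>
    (hgr.sub (hrs.mul_left (g 0))).congr fun k => by ring
  have hshift : ∀ r : ℕ → ℝ, Summable r → Summable (fun k => g k * r k) →
      ∑' k, g k * r k = ∑' k, (g k - g 0) * r k + g 0 * ∑' k, r k := fun r hrs hgr => by
    rw [← tsum_mul_left, ← Summable.tsum_add (hsummable r hrs hgr) (hrs.mul_left _)]
    exact tsum_congr fun k => by ring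
  have hlayer : ∀ r : ℕ → ℝ, 0 ≤ r → Summable (fun k => (g k - g 0) * r k) →
      ENNReal.ofReal (∑' k, (g k - g 0) * r k) =
        ∑' k, ENNReal.ofReal (r k) * ∑ i ∈ range k, ENNReal.ofReal (g (i + 1) - g i) :=
    fun r hr hs => by
      rw [ENNReal.ofReal_tsum_of_nonneg (hnonneg r hr) hs]
      congr 1 with k
      rw [mul_comm, ENNReal.ofReal_mul (hr k), ← sum_range_sub g k,
        ENNReal.ofReal_sum_of_nonneg fun i _ => sub_nonneg.2 (hg i.le_succ)]
  rw [hshift p hps hgp, hshift q hqs hgq, htot, add_le_add_iff_right,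
    ← ENNReal.ofReal_le_ofReal_iff (tsum_nonneg (hnonneg q hq)),
    hlayer p hp (hsummable p hps hgp), hlayer q hq (hsummable q hqs hgq)]
  refine ENNReal.tsum_mul_sum_range_le_of_sum_range_le _ ?_ ?_ fun i => ?_
  · rw [← ENNReal.ofReal_tsum_of_nonneg hp hps, ← ENNReal.ofReal_tsum_of_nonneg hq hqs, htot]
  · rw [← ENNReal.ofReal_tsum_of_nonneg hp hps]; exact ENNReal.ofReal_ne_top
  · rw [← ENNReal.ofReal_sum_of_nonneg fun k _ => hp k,
      ← ENNReal.ofReal_sum_of_nonneg fun k _ => hq k]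
    exact ENNReal.ofReal_le_ofReal (hhead i)

theorem tsum_mul_add_tsum_mul_le_of_monotone_sub {a b F₀ F₁ : ℕ → ℝ} (ha : 0 ≤ a) (hb : 0 ≤ b)
    (hsa : Summable a) (hsb : Summable b) (hab : ∑' k, a k = ∑' k, b k)
    (hst : ∀ i, ∑ k ∈ range (i + 1), b k ≤ ∑ k ∈ range (i + 1), a k)
    (hF : Monotone fun k => F₁ k - F₀ k)
    (h₀q : Summable fun k => F₀ k * max (b k - a k) 0)
    (h₁a : Summable fun k => F₁ k * a k)
    (h₀p : Summable fun k => F₀ k * max (a k - b k) 0)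
    (h₁b : Summable fun k => F₁ k * b k) :
    ∑' k, F₀ k * max (b k - a k) 0 + ∑' k, F₁ k * a k ≤
      ∑' k, F₀ k * max (a k - b k) 0 + ∑' k, F₁ k * b k := by
  set p : ℕ → ℝ := fun k => max (a k - b k) 0
  set q : ℕ → ℝ := fun k => max (b k - a k) 0
  have hp : 0 ≤ p := fun k => le_max_right _ _
  have hq : 0 ≤ q := fun k => le_max_right _ _
  have hqp : ∀ k, q k - p k = b k - a k := fun k => by
    simpa only [neg_sub] using max_zero_sub_max_neg_zero_eq_self (b k - a k)
  have hdom : ∀ {u v : ℕ → ℝ}, 0 ≤ u → u ≤ v → Summable (fun k => F₁ k * v k) →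
      Summable fun k => F₁ k * u k := fun hu huv hv => hv.norm.of_norm_bounded fun k => by
    rw [norm_mul, norm_mul, Real.norm_of_nonneg (hu k), Real.norm_of_nonneg ((hu k).trans (huv k))]
    exact mul_le_mul_of_nonneg_left (huv k) (norm_nonneg _)
  have h₁p := hdom hp (fun k => max_le (sub_le_self _ (hb k)) (ha k)) h₁a
  have h₁q := hdom hq (fun k => max_le (sub_le_self _ (ha k)) (hb k)) h₁b
  have hhead : ∀ i, ∑ k ∈ range (i + 1), q k ≤ ∑ k ∈ range (i + 1), p k := fun i => by
    have := sum_congr rfl fun k (_ : k ∈ range (i + 1)) => hqp k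
    rw [sum_sub_distrib, sum_sub_distrib] at this
    linarith [hst i]
  have key := tsum_mul_le_tsum_mul_of_monotone hp hq (summable_max_sub_zero hsa hsb)
    (summable_max_sub_zero hsb hsa) (tsum_max_sub_zero_comm hsa hsb hab) hhead hF
    ((h₁p.sub h₀p).congr fun k => by ring) ((h₁q.sub h₀q).congr fun k => by ring)
  have hb_eq : ∑' k, F₁ k * b k = ∑' k, F₁ k * a k + (∑' k, F₁ k * q k - ∑' k, F₁ k * p k) := by
    rw [← h₁q.tsum_sub h₁p, ← h₁a.tsum_add (h₁q.sub h₁p)]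
    exact tsum_congr fun k => by linear_combination -F₁ k * hqp k
  have hp_eq : ∑' k, (F₁ k - F₀ k) * p k = ∑' k, F₁ k * p k - ∑' k, F₀ k * p k := by
    rw [← h₁p.tsum_sub h₀p]; exact tsum_congr fun k => by ring
  have hq_eq : ∑' k, (F₁ k - F₀ k) * q k = ∑' k, F₁ k * q k - ∑' k, F₀ k * q k := by
    rw [← h₁q.tsum_sub h₀q]; exact tsum_congr fun k => by ring
  linarith

namespace MeasureTheory

variable {Ω : Type*} [MeasurableSpace Ω] {μ : Measure Ω}

theorem nullMeasurableSet_of_measure_add_measure_compl_le [IsFiniteMeasure μ] {s : Set Ω}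
    (h : μ s + μ sᶜ ≤ μ Set.univ) : NullMeasurableSet s μ := by
  set t := toMeasurable μ s
  set u := toMeasurable μ sᶜ
  have htu : t ∪ u = Set.univ := Set.eq_univ_of_subset
    (Set.union_subset_union (subset_toMeasurable μ s) (subset_toMeasurable μ sᶜ))
    (Set.union_compl_self s)
  have hinter : μ (t ∩ u) = 0 := by
    have := measure_union_add_inter (μ := μ) t (measurableSet_toMeasurable μ sᶜ)
    rw [htu, measure_toMeasurable, measure_toMeasurable] at this
    exact nonpos_iff_eq_zero.1 <| ENNReal.le_of_add_le_add_left (measure_ne_top μ _) <| by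
      rwa [add_zero, this]
  have hnull : μ (t \ s) = 0 :=
    measure_mono_null (Set.inter_subset_inter_right t (subset_toMeasurable μ sᶜ)) hinter
  rw [← Set.sdiff_sdiff_cancel_left (subset_toMeasurable μ s)]
  exact (measurableSet_toMeasurable μ s).nullMeasurableSet.diff (.of_null hnull)

theorem nullMeasurableSet_preimage_singleton_of_tsum_le [IsFiniteMeasure μ] {α : Type*}
    [Countable α] {X : Ω → α} (h : ∑' x, μ (X ⁻¹' {x}) ≤ μ Set.univ) (x : α) :
    NullMeasurableSet (X ⁻¹' {x}) μ := by
  refine nullMeasurableSet_of_measure_add_measure_compl_le (le_trans ?_ h)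
  rw [ENNReal.tsum_eq_add_tsum_ite x]
  gcongr
  calc μ (X ⁻¹' {x})ᶜ ≤ μ (⋃ y, if y = x then ∅ else X ⁻¹' {y}) :=
        measure_mono fun ω hω => Set.mem_iUnion.2 ⟨X ω, by simp_all⟩
    _ ≤ ∑' y, μ (if y = x then ∅ else X ⁻¹' {y}) := measure_iUnion_le _
    _ = ∑' y, if y = x then 0 else μ (X ⁻¹' {y}) := by
        congr! 2 with y; split_ifs <;> simp

theorem hasSum_integral_comp_of_countable {α E : Type*} [Countable α] [NormedAddCommGroup E]
    [NormedSpace ℝ E] [CompleteSpace E] {X : Ω → α} (hX : ∀ x, NullMeasurableSet (X ⁻¹' {x}) μ)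
    {f : α → E} (hf : Integrable (fun ω => f (X ω)) μ) :
    HasSum (fun x => μ.real (X ⁻¹' {x}) • f x) (∫ ω, f (X ω) ∂μ) := by
  have hcover : (⋃ x, X ⁻¹' {x}) = Set.univ := by
    rw [← Set.preimage_iUnion, Set.iUnion_of_singleton, Set.preimage_univ]
  have hdisj : Pairwise (Function.onFun (AEDisjoint μ) fun x => X ⁻¹' {x}) :=
    fun x y hxy => ((Set.disjoint_singleton.2 hxy).preimage X).aedisjoint
  have := hasSum_integral_iUnion_ae hX hdisj (by rw [hcover]; exact hf.integrableOn)
  rw [hcover, setIntegral_univ] at this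
  refine this.congr_fun fun x => ?_
  rw [setIntegral_congr_fun₀ (hX x) (g := fun _ => f x) fun ω hω => by rw [hω], setIntegral_const]

theorem integral_eq_tsum_add_tsum_div [IsProbabilityMeasure μ] {I H : Ω → ℕ}
    (hI : ∀ ω, I ω ≤ 1) {m₀ m₁ : ℕ → ℝ}
    (hm₀ : 0 ≤ m₀) (hm₁ : 0 ≤ m₁) (hs₀ : Summable m₀) (hs₁ : Summable m₁) {c : ℝ} (hc : 0 < c)
    (htot : ∑' k, m₀ k + ∑' k, m₁ k = c)
    (h₀ : ∀ k, μ {ω | I ω = 0 ∧ H ω = k} = ENNReal.ofReal (m₀ k / c))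
    (h₁ : ∀ k, μ {ω | I ω = 1 ∧ H ω = k} = ENNReal.ofReal (m₁ k / c))
    {f : ℕ → ℕ → ℝ} (hf : Integrable (fun ω => f (I ω) (H ω)) μ) :
    Summable (fun k => f 0 k * m₀ k) ∧ Summable (fun k => f 1 k * m₁ k) ∧
      ∫ ω, f (I ω) (H ω) ∂μ = (∑' k, f 0 k * m₀ k + ∑' k, f 1 k * m₁ k) / c := by
  set X : Ω → ℕ ⊕ ℕ := fun ω => if I ω = 0 then .inl (H ω) else .inr (H ω)
  have hfX : ∀ ω, f (I ω) (H ω) = Sum.elim (f 0) (f 1) (X ω) := fun ω => by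
    rcases Nat.le_one_iff_eq_zero_or_eq_one.1 (hI ω) with h | h <;> simp [X, h]
  have hmass : ∀ x, μ (X ⁻¹' {x}) = ENNReal.ofReal (Sum.elim m₀ m₁ x / c) := by
    rintro (k | k)
    · rw [Sum.elim_inl, ← h₀ k]; congr 1; ext ω
      rcases Nat.le_one_iff_eq_zero_or_eq_one.1 (hI ω) with h | h <;> simp [X, h, eq_comm]
    · rw [Sum.elim_inr, ← h₁ k]; congr 1; ext ω
      rcases Nat.le_one_iff_eq_zero_or_eq_one.1 (hI ω) with h | h <;> simp [X, h, eq_comm]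
  have hm : 0 ≤ Sum.elim m₀ m₁ := by rintro (k | k); exacts [hm₀ k, hm₁ k]
  have hsum : HasSum (Sum.elim m₀ m₁) c := htot ▸ HasSum.sum hs₀.hasSum hs₁.hasSum
  have hfib : ∀ x, NullMeasurableSet (X ⁻¹' {x}) μ := by
    refine nullMeasurableSet_preimage_singleton_of_tsum_le (le_of_eq ?_)
    rw [tsum_congr hmass, ← ENNReal.ofReal_tsum_of_nonneg (fun x => div_nonneg (hm x) hc.le)
      (hsum.summable.div_const c), tsum_div_const, hsum.tsum_eq, div_self hc.ne', measure_univ,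
      ENNReal.ofReal_one]
  have key := (hasSum_integral_comp_of_countable hfib (f := Sum.elim (f 0) (f 1))
    (by simpa only [hfX] using hf)).mul_left c
  simp only [← hfX] at key
  have hterm : ∀ x, c * (μ.real (X ⁻¹' {x}) • Sum.elim (f 0) (f 1) x) =
      Sum.elim (fun k => f 0 k * m₀ k) (fun k => f 1 k * m₁ k) x := fun x => by
    rw [measureReal_def, hmass, ENNReal.toReal_ofReal (div_nonneg (hm x) hc.le), smul_eq_mul]
    rcases x with k | k <;> simp only [Sum.elim_inl, Sum.elim_inr] <;> field_simp
  rw [funext hterm] at key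
  have hs₀' := key.summable.comp_injective Sum.inl_injective
  have hs₁' := key.summable.comp_injective Sum.inr_injective
  refine ⟨hs₀', hs₁', ?_⟩
  rw [eq_div_iff hc.ne', mul_comm, ← key.tsum_eq, Summable.tsum_sum hs₀' hs₁']
  rfl

end MeasureTheory

/-- bivariate supermodular ordering from stochastic dominance between
two pmf's `a` and `b` on `ℕ` (the mass-transfer construction used in the proof of the
synecdochic-pair ordering theorem). -/
theorem mass_transfer_supermodular
    {Ω Ω' : Type*}
    [MeasureSpace Ω] [IsProbabilityMeasure (ℙ : Measure Ω)]
    [MeasureSpace Ω'] [IsProbabilityMeasure (ℙ : Measure Ω')]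
    (a b : ℕ → ℝ)
    (ha0 : ∀ k, 0 ≤ a k) (hb0 : ∀ k, 0 ≤ b k)
    (ha1 : ∑' k, a k = 1) (hb1 : ∑' k, b k = 1)
    (hst : ∀ k : ℕ, ∑ j ∈ Finset.range (k + 1), b j ≤ ∑ j ∈ Finset.range (k + 1), a j)
    (r : ℝ) (hr : r = ∑' k, max (b k - a k) 0)
    (I H : Ω → ℕ) (I' H' : Ω' → ℕ)
    (hI01 : ∀ ω, I ω ≤ 1) (hI'01 : ∀ ω, I' ω ≤ 1)
    (hjoint1 : ∀ k : ℕ,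
      (ℙ : Measure Ω) {ω | I ω = 1 ∧ H ω = k} = ENNReal.ofReal (a k / (1 + r)))
    (hjoint0 : ∀ k : ℕ,
      (ℙ : Measure Ω) {ω | I ω = 0 ∧ H ω = k} =
        ENNReal.ofReal (max (b k - a k) 0 / (1 + r)))
    (hjoint1' : ∀ k : ℕ,
      (ℙ : Measure Ω') {ω | I' ω = 1 ∧ H' ω = k} = ENNReal.ofReal (b k / (1 + r)))
    (hjoint0' : ∀ k : ℕ,
      (ℙ : Measure Ω') {ω | I' ω = 0 ∧ H' ω = k} =
        ENNReal.ofReal (max (a k - b k) 0 / (1 + r))) :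
    SupermodularLE (fun ω => ((I ω : ℝ), (H ω : ℝ)))
      (fun ω => ((I' ω : ℝ), (H' ω : ℝ))) := by
  intro ζ hζ hintX hintY
  have summable_of_tsum_eq_one : ∀ {u : ℕ → ℝ}, ∑' k, u k = 1 → Summable u := fun hu =>
    not_not.1 fun h => by simp [tsum_eq_zero_of_not_summable h] at hu
  have hsa := summable_of_tsum_eq_one ha1
  have hsb := summable_of_tsum_eq_one hb1
  have hrp : ∑' k, max (a k - b k) 0 = r := hr ▸ tsum_max_sub_zero_comm hsa hsb (ha1.trans hb1.symm)
  have hr0 : 0 < 1 + r := by linarith [hr ▸ tsum_nonneg fun k => le_max_right (b k - a k) 0]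
  obtain ⟨hX₀, hX₁, hX⟩ := integral_eq_tsum_add_tsum_div (m₀ := fun k => max (b k - a k) 0) hI01
    (fun k => le_max_right _ _) ha0 (summable_max_sub_zero hsb hsa) hsa hr0
    (by rw [← hr, ha1, add_comm]) hjoint0 hjoint1
    (f := fun i k => ζ (i, k)) hintX
  obtain ⟨hY₀, hY₁, hY⟩ := integral_eq_tsum_add_tsum_div (m₀ := fun k => max (a k - b k) 0) hI'01
    (fun k => le_max_right _ _) hb0 (summable_max_sub_zero hsa hsb) hsb hr0
    (by rw [hrp, hb1, add_comm]) hjoint0' hjoint1'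
    (f := fun i k => ζ (i, k)) hintY
  simp only [Nat.cast_zero, Nat.cast_one] at hX₀ hX₁ hX hY₀ hY₁ hY
  rw [hX, hY]
  exact div_le_div_of_nonneg_right (tsum_mul_add_tsum_mul_le_of_monotone_sub ha0 hb0 hsa hsb
    (ha1.trans hb1.symm) hst (fun k l hkl => hζ.sub_le_sub zero_le_one (Nat.cast_le.2 hkl))
    hX₀ hX₁ hY₀ hY₁) hr0.le

end
end

section
/- Covariance with the aggregate equals an exponentially transformed closeness index: let T=(V,E) be a tree on d vertices with graph distance dist(v,j) (the number of edges on the unique path from v to j, with dist(v,v)=0), λ>0 and α∈(0,1). Let N∼MPMRF(λ,α1,T), where α1 assigns the parameter α to every edge, and M=∑_{j∈V}N_j. Then for every v∈V, Cov(N_v,M)=λ·∑_{j∈V}α^{dist(v,j)}. -/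
open MeasureTheory ProbabilityTheory
open scoped ENNReal Classical

noncomputable section

/-- covariance `Cov(X,Y) = E[XY] - E[X]E[Y]` (w.r.t. the ambient probability measure). -/
def cov {Ω : Type*} [MeasureSpace Ω] (X Y : Ω → ℝ) : ℝ :=
  ∫ ω, X ω * Y ω ∂ℙ - (∫ ω, X ω ∂ℙ) * (∫ ω, Y ω ∂ℙ)


/-!
Write `N u = L u + α ∘ N (pa u)`. The innovation `L u` and the coins thinning `N (pa u)` are
independent of every variable built from the innovations of other vertices, so for such a `Y`
`E[N u Y] = E[L u] E[Y] + α E[N (pa u) Y]`. This gives `E[N w] = λ` by induction from the root,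
and, when `u` is not an ancestor of `w` (so that `dist u w = dist (pa u) w + 1` in the tree),
`E[N u N w] = λ² (1 - α) + α E[N (pa u) N w]`. With the diagonal `E[(N u)²] = λ² + λ`, obtained
from the Poisson moments and the second moment of a thinning, induction along the tree yields
`E[N u N w] = λ² + λ α ^ dist u w`, i.e. `Cov(N u, N w) = λ α ^ dist u w`; sum over `w`.

All moments are lower Lebesgue integrals in `ℝ≥0∞`, where no integrability side conditions arise.
-/

theorem lintegral_comp_eq_tsum {Ω : Type*} [MeasurableSpace Ω] {μ : Measure Ω} {X : Ω → ℕ}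
    (hX : Measurable X) (g : ℕ → ℝ≥0∞) : ∫⁻ ω, g (X ω) ∂μ = ∑' k, g k * μ {ω | X ω = k} := by
  rw [← lintegral_map (measurable_from_nat (f := g)) hX, lintegral_countable']
  simp_rw [Measure.map_apply hX (measurableSet_singleton _)]
  rfl

theorem integral_natCast_eq_of_lintegral {Ω : Type*} [MeasurableSpace Ω] {μ : Measure Ω}
    {Z : Ω → ℕ} (hZ : Measurable Z) {c : ℝ} (hc : 0 ≤ c)
    (h : ∫⁻ ω, (Z ω : ℝ≥0∞) ∂μ = ENNReal.ofReal c) : ∫ ω, (Z ω : ℝ) ∂μ = c := by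
  rw [integral_eq_lintegral_of_nonneg_ae (ae_of_all _ fun ω => Nat.cast_nonneg _)
    (measurable_from_nat.comp hZ).aestronglyMeasurable]
  simp [h, hc]

theorem ENNReal.ofReal_add_ofReal_one_sub {α : ℝ} (hα : α ∈ Set.Icc (0 : ℝ) 1) :
    ENNReal.ofReal α + ENNReal.ofReal (1 - α) = 1 := by
  rw [← ENNReal.ofReal_add hα.1 (sub_nonneg.2 hα.2), add_sub_cancel, ENNReal.ofReal_one]

theorem sum_range_mul_eq_tsum (n : ℕ) (c : ℕ → ℝ≥0∞) (y : ℝ≥0∞) :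
    (∑ i ∈ Finset.range n, c i) * y = ∑' i, c i * (if i < n then y else 0) := by
  rw [tsum_eq_sum (s := Finset.range n) fun i hi => by simp_all, Finset.sum_mul]
  exact Finset.sum_congr rfl fun i hi => by rw [if_pos (Finset.mem_range.1 hi)]

theorem tsum_ite_lt (n : ℕ) (y : ℝ≥0∞) : ∑' i, (if i < n then y else 0) = n * y := by
  simpa using (sum_range_mul_eq_tsum n 1 y).symm

section Poisson

variable {Ω : Type*} [MeasureSpace Ω] {X : Ω → ℕ} {t : ℝ}

theorem natCast_mul_poisson_succ (ht : 0 ≤ t) (k : ℕ) :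
    ((k + 1 : ℕ) : ℝ≥0∞) * ENNReal.ofReal (Real.exp (-t) * t ^ (k + 1) / (k + 1).factorial)
      = ENNReal.ofReal t * ENNReal.ofReal (Real.exp (-t) * t ^ k / k.factorial) := by
  rw [← ENNReal.ofReal_natCast, ← ENNReal.ofReal_mul (by positivity),
    ← ENNReal.ofReal_mul ht, Nat.factorial_succ]
  congr 1
  push_cast
  field_simp
  ring

/-- The Stein–Chen identity of the Poisson law. -/
theorem IsPoissonRV.lintegral_mul_comp (hX : IsPoissonRV X t) (ht : 0 ≤ t) (g : ℕ → ℝ≥0∞) :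
    ∫⁻ ω, X ω * g (X ω) ∂ℙ = ENNReal.ofReal t * ∫⁻ ω, g (X ω + 1) ∂ℙ := by
  calc ∫⁻ ω, X ω * g (X ω) ∂ℙ = ∑' k : ℕ, k * g k * ℙ {ω | X ω = k} :=
        lintegral_comp_eq_tsum hX.1 (fun k => k * g k)
    _ = ∑' k : ℕ, (k + 1 : ℕ) * g (k + 1) * ℙ {ω | X ω = k + 1} := by
        rw [tsum_eq_zero_add' ENNReal.summable]
        simp
    _ = ∑' k : ℕ, ENNReal.ofReal t * (g (k + 1) * ℙ {ω | X ω = k}) := by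
        refine tsum_congr fun k => ?_
        rw [hX.2, hX.2, mul_right_comm, natCast_mul_poisson_succ ht]
        ring
    _ = ENNReal.ofReal t * ∫⁻ ω, g (X ω + 1) ∂ℙ := by
        rw [ENNReal.tsum_mul_left, lintegral_comp_eq_tsum hX.1 (fun k => g (k + 1))]

variable [IsProbabilityMeasure (ℙ : Measure Ω)]

theorem IsPoissonRV.lintegral (hX : IsPoissonRV X t) (ht : 0 ≤ t) :
    ∫⁻ ω, (X ω : ℝ≥0∞) ∂ℙ = ENNReal.ofReal t := by
  simpa using hX.lintegral_mul_comp ht 1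

theorem IsPoissonRV.lintegral_mul_self (hX : IsPoissonRV X t) (ht : 0 ≤ t) :
    ∫⁻ ω, (X ω : ℝ≥0∞) * X ω ∂ℙ = ENNReal.ofReal t * (ENNReal.ofReal t + 1) := by
  rw [hX.lintegral_mul_comp ht Nat.cast]
  push_cast
  rw [lintegral_add_right _ measurable_const, hX.lintegral ht, lintegral_const, measure_univ,
    mul_one]

end Poisson

section Thinning

variable {Ω ι : Type*}

theorem Measurable.natCast_ennreal {_ : MeasurableSpace Ω} {X : Ω → ℕ} (hX : Measurable X) :
    Measurable fun ω => (X ω : ℝ≥0∞) :=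
  measurable_from_nat.comp hX

theorem Measurable.sum_range {_ : MeasurableSpace Ω} {X : Ω → ℕ} (hX : Measurable X)
    {g : ℕ → Ω → ℕ} (hg : ∀ i, Measurable (g i)) :
    Measurable fun ω => ∑ i ∈ Finset.range (X ω), g i ω :=
  (measurable_from_prod_countable_left (f := fun q : Ω × ℕ => ∑ i ∈ Finset.range q.2, g i q.1)
    fun n => Finset.measurable_sum (Finset.range n) fun i _ => hg i).comp (measurable_id.prodMk hX)

abbrev sigmaOn {β : Type*} [MeasurableSpace β] (f : ι → Ω → β) (s : Set ι) : MeasurableSpace Ω :=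
  ⨆ j ∈ s, MeasurableSpace.comap (f j) inferInstance

section SigmaOn

variable {β : Type*} [MeasurableSpace β] {f : ι → Ω → β}

theorem sigmaOn_mono {s t : Set ι} (h : s ⊆ t) : sigmaOn f s ≤ sigmaOn f t :=
  biSup_mono h

theorem measurable_sigmaOn {s : Set ι} {j : ι} (hj : j ∈ s) : Measurable[sigmaOn f s] (f j) :=
  Measurable.of_comap_le (le_biSup (fun j => MeasurableSpace.comap (f j) inferInstance) hj)

variable [MeasurableSpace Ω]

theorem sigmaOn_le (hf : ∀ j, Measurable (f j)) (s : Set ι) :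
    sigmaOn f s ≤ ‹MeasurableSpace Ω› :=
  iSup₂_le fun j _ => (hf j).comap_le

theorem Measurable.of_sigmaOn (hf : ∀ j, Measurable (f j)) {s : Set ι} {γ : Type*}
    [MeasurableSpace γ] {X : Ω → γ} (hX : Measurable[sigmaOn f s] X) : Measurable X :=
  hX.mono (sigmaOn_le hf s) le_rfl

end SigmaOn

variable [MeasurableSpace Ω] {μ : Measure Ω} {f : ι → Ω → ℕ}

theorem lintegral_tsum_mul_tsum {u v : ℕ → Ω → ℝ≥0∞} (hu : ∀ i, Measurable (u i))
    (hv : ∀ j, Measurable (v j)) :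
    ∫⁻ ω, (∑' i, u i ω) * ∑' j, v j ω ∂μ = ∑' i, ∑' j, ∫⁻ ω, u i ω * v j ω ∂μ := by
  simp_rw [← ENNReal.tsum_mul_right, ← ENNReal.tsum_mul_left]
  rw [lintegral_tsum fun i => (Measurable.tsum fun j => (hu i).fun_mul (hv j)).aemeasurable]
  exact tsum_congr fun i => lintegral_tsum fun j => ((hu i).fun_mul (hv j)).aemeasurable

namespace ProbabilityTheory.iIndepFun

theorem lintegral_mul_of_disjoint (hind : iIndepFun f μ) (hf : ∀ j, Measurable (f j))
    {s t : Set ι} (hst : Disjoint s t) {X Y : Ω → ℝ≥0∞} (hX : Measurable[sigmaOn f s] X)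
    (hY : Measurable[sigmaOn f t] Y) :
    ∫⁻ ω, X ω * Y ω ∂μ = (∫⁻ ω, X ω ∂μ) * ∫⁻ ω, Y ω ∂μ :=
  lintegral_mul_eq_lintegral_mul_lintegral_of_independent_measurableSpace (sigmaOn_le hf s)
    (sigmaOn_le hf t) (indep_iSup_of_disjoint (fun j => (hf j).comap_le) hind.iIndep hst) hX hY

theorem lintegral_coord_mul (hind : iIndepFun f μ) (hf : ∀ j, Measurable (f j)) {s : Set ι}
    {j : ι} (hj : j ∉ s) {Y : Ω → ℝ≥0∞} (hY : Measurable[sigmaOn f s] Y) :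
    ∫⁻ ω, f j ω * Y ω ∂μ = (∫⁻ ω, (f j ω : ℝ≥0∞) ∂μ) * ∫⁻ ω, Y ω ∂μ :=
  hind.lintegral_mul_of_disjoint hf (Set.disjoint_singleton_left.2 hj)
    (measurable_sigmaOn (Set.mem_singleton j)).natCast_ennreal hY

theorem lintegral_thin_mul (hind : iIndepFun f μ) (hf : ∀ j, Measurable (f j)) {b : ℕ → ι}
    {p : ℝ≥0∞} (hp : ∀ i, ∫⁻ ω, (f (b i) ω : ℝ≥0∞) ∂μ = p) {s : Set ι} (hb : ∀ i, b i ∉ s)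
    {X : Ω → ℕ} {Y : Ω → ℝ≥0∞}
    (hX : Measurable[sigmaOn f s] X) (hY : Measurable[sigmaOn f s] Y) :
    ∫⁻ ω, (∑ i ∈ Finset.range (X ω), f (b i) ω : ℕ) * Y ω ∂μ = p * ∫⁻ ω, X ω * Y ω ∂μ := by
  have hZ : ∀ i, Measurable[sigmaOn f s] fun ω => if i < X ω then Y ω else 0 := fun i =>
    Measurable.ite (measurableSet_lt measurable_const hX) hY measurable_const
  calc ∫⁻ ω, (∑ i ∈ Finset.range (X ω), f (b i) ω : ℕ) * Y ω ∂μ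
      = ∫⁻ ω, ∑' i, f (b i) ω * (if i < X ω then Y ω else 0) ∂μ := by
        push_cast
        simp only [sum_range_mul_eq_tsum]
    _ = ∑' i, p * ∫⁻ ω, (if i < X ω then Y ω else 0) ∂μ := by
        rw [lintegral_tsum fun i => ((hf _).natCast_ennreal.fun_mul
          ((hZ i).of_sigmaOn hf)).aemeasurable]
        exact tsum_congr fun i => by rw [hind.lintegral_coord_mul hf (hb i) (hZ i), hp]
    _ = p * ∫⁻ ω, X ω * Y ω ∂μ := by
        rw [ENNReal.tsum_mul_left, ← lintegral_tsum fun i => ((hZ i).of_sigmaOn hf).aemeasurable]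
        simp only [tsum_ite_lt]

theorem lintegral_coord_mul_coord_mul [IsProbabilityMeasure μ] (hind : iIndepFun f μ)
    (hf : ∀ j, Measurable (f j)) {b : ℕ → ι} (hb_inj : b.Injective) (hb01 : ∀ i ω, f (b i) ω ≤ 1)
    {p : ℝ≥0∞} (hp : ∀ i, ∫⁻ ω, (f (b i) ω : ℝ≥0∞) ∂μ = p) {s : Set ι} (hb : ∀ i, b i ∉ s)
    {H : ℕ → Ω → ℝ≥0∞} (hH : ∀ i, Measurable[sigmaOn f s] (H i))
    (hH_idem : ∀ i ω, H i ω * H i ω = H i ω) (i j : ℕ) :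
    ∫⁻ ω, f (b i) ω * H i ω * (f (b j) ω * H j ω) ∂μ
      = p ^ 2 * ∫⁻ ω, H i ω * H j ω ∂μ + if i = j then p * (1 - p) * ∫⁻ ω, H i ω ∂μ else 0 := by
  by_cases hij : i = j
  · subst hij
    have hB_idem : ∀ ω, (f (b i) ω : ℝ≥0∞) * f (b i) ω = f (b i) ω := fun ω => by
      rcases Nat.le_one_iff_eq_zero_or_eq_one.1 (hb01 i ω) with h | h <;> simp [h]
    have hp1 : p ≤ 1 := calc
      p = ∫⁻ ω, (f (b i) ω : ℝ≥0∞) ∂μ := (hp i).symm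
      _ ≤ ∫⁻ _, 1 ∂μ := lintegral_mono fun ω => Nat.cast_le_one.2 (hb01 i ω)
      _ = 1 := by simp
    have h : ∀ ω, (f (b i) ω : ℝ≥0∞) * H i ω * (f (b i) ω * H i ω) = f (b i) ω * H i ω :=
      fun ω => by rw [mul_mul_mul_comm, hB_idem, hH_idem]
    simp only [h, hH_idem, if_true]
    rw [hind.lintegral_coord_mul hf (hb i) (hH i), hp, ← add_mul, pow_two, ← mul_add,
      add_tsub_cancel_of_le hp1, mul_one]
  · have h : ∀ ω, (f (b i) ω : ℝ≥0∞) * H i ω * (f (b j) ω * H j ω)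
        = f (b i) ω * (f (b j) ω * (H i ω * H j ω)) := fun ω => by ring
    have hj : b j ∈ s ∪ {b j} := Or.inr rfl
    have hi : b i ∉ s ∪ {b j} := fun h => h.elim (hb i) fun h => hij (hb_inj h)
    have hHH : Measurable[sigmaOn f s] fun ω => H i ω * H j ω := (hH i).fun_mul (hH j)
    simp only [h, hij, if_false, add_zero]
    rw [hind.lintegral_coord_mul hf hi ((measurable_sigmaOn hj).natCast_ennreal.fun_mul
        (hHH.mono (sigmaOn_mono Set.subset_union_left) le_rfl)),
      hind.lintegral_coord_mul hf (hb j) hHH, hp, hp, ← mul_assoc, pow_two]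

theorem lintegral_thin_mul_self [IsProbabilityMeasure μ]
    (hind : iIndepFun f μ) (hf : ∀ j, Measurable (f j)) {b : ℕ → ι} (hb_inj : b.Injective)
    (hb01 : ∀ i ω, f (b i) ω ≤ 1) {p : ℝ≥0∞} (hp : ∀ i, ∫⁻ ω, (f (b i) ω : ℝ≥0∞) ∂μ = p)
    {s : Set ι} (hb : ∀ i, b i ∉ s) {X : Ω → ℕ} (hX : Measurable[sigmaOn f s] X) :
    ∫⁻ ω, ((∑ i ∈ Finset.range (X ω), f (b i) ω : ℕ) : ℝ≥0∞)
        * (∑ i ∈ Finset.range (X ω), f (b i) ω : ℕ) ∂μ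
      = p ^ 2 * ∫⁻ ω, (X ω : ℝ≥0∞) * X ω ∂μ + p * (1 - p) * ∫⁻ ω, (X ω : ℝ≥0∞) ∂μ := by
  set H : ℕ → Ω → ℝ≥0∞ := fun i ω => if i < X ω then 1 else 0
  have hH : ∀ i, Measurable[sigmaOn f s] (H i) := fun i =>
    Measurable.ite (measurableSet_lt measurable_const hX) measurable_const measurable_const
  have hH' : ∀ i, Measurable (H i) := fun i => (hH i).of_sigmaOn hf
  have hH_idem : ∀ i ω, H i ω * H i ω = H i ω := fun i ω => by by_cases h : i < X ω <;> simp [H, h]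
  have hterm := hind.lintegral_coord_mul_coord_mul hf hb_inj hb01 hp hb hH hH_idem
  calc ∫⁻ ω, ((∑ i ∈ Finset.range (X ω), f (b i) ω : ℕ) : ℝ≥0∞)
        * (∑ i ∈ Finset.range (X ω), f (b i) ω : ℕ) ∂μ
      = ∑' i, ∑' j, ∫⁻ ω, f (b i) ω * H i ω * (f (b j) ω * H j ω) ∂μ := by
        have hT : ∀ ω, ((∑ i ∈ Finset.range (X ω), f (b i) ω : ℕ) : ℝ≥0∞)
            = ∑' i, f (b i) ω * H i ω := fun ω => by
          simpa [H] using sum_range_mul_eq_tsum (X ω) (fun i => (f (b i) ω : ℝ≥0∞)) 1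
        have hBH : ∀ i, Measurable fun ω => (f (b i) ω : ℝ≥0∞) * H i ω := fun i =>
          (hf _).natCast_ennreal.fun_mul (hH' i)
        simp only [hT]
        exact lintegral_tsum_mul_tsum hBH hBH
    _ = p ^ 2 * ∑' i, ∑' j, ∫⁻ ω, H i ω * H j ω ∂μ + p * (1 - p) * ∑' i, ∫⁻ ω, H i ω ∂μ := by
        simp only [hterm, ENNReal.tsum_add, ENNReal.tsum_mul_left, tsum_ite_eq']
    _ = p ^ 2 * ∫⁻ ω, (X ω : ℝ≥0∞) * X ω ∂μ + p * (1 - p) * ∫⁻ ω, (X ω : ℝ≥0∞) ∂μ := by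
        have hX_tsum : ∀ ω, (X ω : ℝ≥0∞) = ∑' i, H i ω := fun ω => by simp [H, tsum_ite_lt]
        simp only [hX_tsum]
        rw [lintegral_tsum_mul_tsum hH' hH', lintegral_tsum fun i => (hH' i).aemeasurable]

end ProbabilityTheory.iIndepFun

end Thinning

section RootedTree

variable {V : Type*} {pa : V → V} {r : V}

structure IsRootedAt (pa : V → V) (r : V) : Prop where
  apply_root : pa r = r
  exists_iterate_eq_root : ∀ v, ∃ n, pa^[n] v = r

theorem IsParentMap.isRootedAt {G : SimpleGraph V} (h : IsParentMap G r pa) : IsRootedAt pa r :=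
  ⟨h.1, h.2.2⟩

def IsAncestor (pa : V → V) (u w : V) : Prop := ∃ n, pa^[n] w = u

theorem IsAncestor.refl (pa : V → V) (u : V) : IsAncestor pa u u := ⟨0, rfl⟩

theorem IsAncestor.of_apply {u w : V} : IsAncestor pa u (pa w) → IsAncestor pa u w
  | ⟨n, h⟩ => ⟨n + 1, by rwa [Function.iterate_succ_apply]⟩

theorem IsAncestor.apply_of_ne {u w : V} : IsAncestor pa u w → u ≠ w → IsAncestor pa u (pa w)
  | ⟨0, h⟩, hne => absurd h.symm hne
  | ⟨n + 1, h⟩, _ => ⟨n, by rwa [← Function.iterate_succ_apply]⟩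

namespace IsRootedAt

theorem induction (h : IsRootedAt pa r) {P : V → Prop} (root : P r)
    (step : ∀ v, v ≠ r → P (pa v) → P v) (v : V) : P v := by
  obtain ⟨n, hn⟩ := h.exists_iterate_eq_root v
  induction n generalizing v with
  | zero => exact (Function.iterate_zero_apply pa v ▸ hn) ▸ root
  | succ n ih =>
    by_cases hv : v = r
    · exact hv ▸ root
    · exact step v hv (ih (pa v) (by rwa [← Function.iterate_succ_apply]))

theorem iterate_root (h : IsRootedAt pa r) (n : ℕ) : pa^[n] r = r :=
  Function.iterate_fixed h.apply_root n

theorem eq_root_of_isPeriodicPt (h : IsRootedAt pa r) {v : V} {n : ℕ} (hn : 0 < n)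
    (hv : Function.IsPeriodicPt pa n v) : v = r := by
  obtain ⟨k, hk⟩ := h.exists_iterate_eq_root v
  calc v = pa^[n * k] v := ((hv.mul_const k).eq).symm
    _ = pa^[n * k - k] (pa^[k] v) := by
        rw [← Function.iterate_add_apply, Nat.sub_add_cancel (Nat.le_mul_of_pos_left k hn)]
    _ = r := by rw [hk, h.iterate_root]

theorem isAncestor_root (h : IsRootedAt pa r) (w : V) : IsAncestor pa r w :=
  h.exists_iterate_eq_root w

theorem eq_of_isAncestor_root (h : IsRootedAt pa r) {u : V} : IsAncestor pa u r → u = r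
  | ⟨n, hn⟩ => hn ▸ h.iterate_root n

theorem not_isAncestor_apply (h : IsRootedAt pa r) {v : V} (hv : v ≠ r) :
    ¬ IsAncestor pa v (pa v) := fun ⟨n, hn⟩ =>
  hv (h.eq_root_of_isPeriodicPt n.succ_pos (by rwa [Function.IsPeriodicPt, Function.IsFixedPt,
    Function.iterate_succ_apply]))

theorem isAncestor_antisymm (h : IsRootedAt pa r) {u w : V} :
    IsAncestor pa u w → IsAncestor pa w u → u = w
  | ⟨0, hn⟩, _ => hn.symm
  | ⟨n + 1, hn⟩, ⟨m, hm⟩ => by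
    have hw : w = r := h.eq_root_of_isPeriodicPt (Nat.add_pos_right m n.succ_pos)
      (by rw [Function.IsPeriodicPt, Function.IsFixedPt, Function.iterate_add_apply, hn, hm])
    rw [← hn, hw, h.iterate_root]

end IsRootedAt

theorem SimpleGraph.IsAcyclic.dist_eq_length {G : SimpleGraph V} (hG : G.IsAcyclic) {u v : V}
    {p : G.Walk u v} (hp : p.IsPath) : G.dist u v = p.length := by
  obtain ⟨q, hq, hlen⟩ := p.reachable.exists_path_of_dist
  rw [← hlen, congrArg (fun p : G.Path u v => p.1.length)
    ((hG.subsingleton_path u v).elim ⟨q, hq⟩ ⟨p, hp⟩)]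

theorem SimpleGraph.IsAcyclic.dist_eq_dist_add_one_of_walk {G : SimpleGraph V} (hG : G.IsAcyclic)
    {u v w : V} (hadj : G.Adj v u) (W : G.Walk w v) (hu : u ∉ W.support) :
    G.dist w u = G.dist w v + 1 := by
  have hp := W.bypass_isPath
  have hu' : u ∉ W.bypass.support := fun h => hu (W.support_bypass_subset_support h)
  rw [hG.dist_eq_length (hp.concat hu' hadj), hG.dist_eq_length hp, SimpleGraph.Walk.length_concat]

namespace IsParentMap

variable {G : SimpleGraph V}

theorem exists_walk_to_root (h : IsParentMap G r pa) (v : V) :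
    ∃ W : G.Walk v r, ∀ x ∈ W.support, IsAncestor pa x v := by
  induction v using h.isRootedAt.induction with
  | root => exact ⟨.nil, by simp [IsAncestor.refl]⟩
  | step v hv ih =>
    obtain ⟨W, hW⟩ := ih
    refine ⟨.cons (h.2.1 v hv).symm W, ?_⟩
    simp only [SimpleGraph.Walk.support_cons, List.mem_cons, forall_eq_or_imp]
    exact ⟨IsAncestor.refl pa v, fun x hx => (hW x hx).of_apply⟩

theorem dist_eq_dist_apply_add_one (hG : G.IsTree) (h : IsParentMap G r pa) {u w : V}
    (huw : ¬ IsAncestor pa u w) : G.dist u w = G.dist (pa u) w + 1 := by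
  have hu : u ≠ r := fun hu => huw (hu ▸ h.isRootedAt.isAncestor_root w)
  obtain ⟨Ww, hWw⟩ := h.exists_walk_to_root w
  obtain ⟨Wu, hWu⟩ := h.exists_walk_to_root (pa u)
  rw [SimpleGraph.dist_comm, SimpleGraph.dist_comm (u := pa u)]
  -- going up from `w` to the root and down to `pa u` never visits `u`
  refine hG.isAcyclic.dist_eq_dist_add_one_of_walk (h.2.1 u hu) (Ww.append Wu.reverse) ?_
  rw [SimpleGraph.Walk.mem_support_append_iff, SimpleGraph.Walk.support_reverse, List.mem_reverse]
  rintro (hmem | hmem)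
  · exact huw (hWw u hmem)
  · exact h.isRootedAt.not_isAncestor_apply hu (hWu u hmem)

end IsParentMap

end RootedTree

section Model

variable {V Ω : Type*}

/-- The family whose joint independence `IsMPMRF` postulates. -/
def innovations (L : V → Ω → ℕ) (I : V → ℕ → Ω → Bool) : V ⊕ V × ℕ → Ω → ℕ :=
  Sum.elim L fun p ω => if I p.1 p.2 ω then 1 else 0

@[simp]
theorem innovations_inl (L : V → Ω → ℕ) (I : V → ℕ → Ω → Bool) (v : V) :
    innovations L I (.inl v) = L v := rfl

theorem innovations_inr_le_one (L : V → Ω → ℕ) (I : V → ℕ → Ω → Bool) (v : V) (i : ℕ) (ω : Ω) :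
    innovations L I (.inr (v, i)) ω ≤ 1 := by
  simp only [innovations, Sum.elim_inr]
  split <;> simp

def ancestorInnovations (pa : V → V) (w : V) : Set (V ⊕ V × ℕ) :=
  {x | IsAncestor pa (Sum.elim id Prod.fst x) w}

variable [MeasureSpace Ω]

/-- `IsMPMRF` with constant edge parameter `α` and its innovations `L`, `I` exposed. -/
structure IsMPMRFWith (lam α : ℝ) (pa : V → V) (r : V) (L : V → Ω → ℕ)
    (I : V → ℕ → Ω → Bool) (N : V → Ω → ℕ) : Prop where
  indep : iIndepFun (innovations L I) ℙ
  poisson_root : IsPoissonRV (L r) lam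
  poisson : ∀ v, v ≠ r → IsPoissonRV (L v) (lam * (1 - α))
  bernoulli : ∀ v i, IsBernoulliRV (I v i) α
  eq_root : ∀ ω, N r ω = L r ω
  eq_thin : ∀ v, v ≠ r → ∀ ω,
    N v ω = L v ω + ∑ i ∈ Finset.range (N (pa v) ω), innovations L I (.inr (v, i)) ω

theorem IsMPMRF.exists_isMPMRFWith [Fintype V] [DecidableEq V] {lam α : ℝ} {pa : V → V} {r : V}
    {N : V → Ω → ℕ} (hN : IsMPMRF lam (fun _ _ => α) pa r N) :
    ∃ L I, IsMPMRFWith lam α pa r L I N :=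
  let ⟨L, I, hind, hLr, hL, hI, hNr, hN⟩ := hN
  ⟨L, I, hind, hLr, hL, hI, hNr, hN⟩

namespace IsMPMRFWith

variable {lam α : ℝ} {pa : V → V} {r : V} {L : V → Ω → ℕ} {I : V → ℕ → Ω → Bool}
  {N : V → Ω → ℕ}

theorem measurable_innovations (h : IsMPMRFWith lam α pa r L I N) :
    ∀ j, Measurable (innovations L I j)
  | .inl v => if hv : v = r then hv ▸ h.poisson_root.1 else (h.poisson v hv).1
  | .inr (v, i) => Measurable.ite ((h.bernoulli v i).1 (measurableSet_singleton true))
      measurable_const measurable_const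

theorem measurable_ancestorInnovations (h : IsMPMRFWith lam α pa r L I N)
    (hpa : IsRootedAt pa r) (w : V) :
    Measurable[sigmaOn (innovations L I) (ancestorInnovations pa w)] (N w) := by
  have hself : ∀ {j v}, Sum.elim id Prod.fst j = v → j ∈ ancestorInnovations pa v :=
    fun hj => hj ▸ IsAncestor.refl pa _
  induction w using hpa.induction with
  | root =>
    rw [funext h.eq_root]
    exact measurable_sigmaOn (f := innovations L I) (j := .inl r) (hself rfl)
  | step v hv ih =>
    rw [funext (h.eq_thin v hv)]
    refine (measurable_sigmaOn (f := innovations L I) (j := .inl v) (hself rfl)).add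
      (Measurable.sum_range (ih.mono (sigmaOn_mono fun j hj => ?_) le_rfl)
        fun i => measurable_sigmaOn (f := innovations L I) (hself rfl))
    exact IsAncestor.of_apply hj

theorem measurable_apply (h : IsMPMRFWith lam α pa r L I N) (hpa : IsRootedAt pa r) (w : V) :
    Measurable (N w) :=
  (h.measurable_ancestorInnovations hpa w).of_sigmaOn h.measurable_innovations

theorem lintegral_bernoulli (h : IsMPMRFWith lam α pa r L I N) (v : V) (i : ℕ) :
    ∫⁻ ω, (innovations L I (.inr (v, i)) ω : ℝ≥0∞) ∂ℙ = ENNReal.ofReal α := by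
  have hind : (fun ω => (innovations L I (.inr (v, i)) ω : ℝ≥0∞))
      = (I v i ⁻¹' {true}).indicator 1 :=
    funext fun ω => by by_cases hI : I v i ω <;> simp [innovations, hI]
  rw [hind, lintegral_indicator_one ((h.bernoulli v i).1 (measurableSet_singleton true))]
  exact (h.bernoulli v i).2

theorem lintegral_mul_eq (h : IsMPMRFWith lam α pa r L I N) (hpa : IsRootedAt pa r) {u : V}
    (hu : u ≠ r) {s : Set (V ⊕ V × ℕ)} (hs_pa : ancestorInnovations pa (pa u) ⊆ s)
    (hs : ∀ j ∈ s, Sum.elim id Prod.fst j ≠ u) {Y : Ω → ℝ≥0∞}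
    (hY : Measurable[sigmaOn (innovations L I) s] Y) :
    ∫⁻ ω, N u ω * Y ω ∂ℙ = (∫⁻ ω, (L u ω : ℝ≥0∞) ∂ℙ) * ∫⁻ ω, Y ω ∂ℙ
      + ENNReal.ofReal α * ∫⁻ ω, N (pa u) ω * Y ω ∂ℙ := by
  have hX := (h.measurable_ancestorInnovations hpa (pa u)).mono (sigmaOn_mono hs_pa) le_rfl
  have hL := h.indep.lintegral_coord_mul h.measurable_innovations (j := .inl u)
    (fun hj => hs _ hj rfl) hY
  have hT := h.indep.lintegral_thin_mul h.measurable_innovations (b := fun i => .inr (u, i))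
    (h.lintegral_bernoulli u) (fun i hi => hs _ hi rfl) hX hY
  have hLm : Measurable (L u) := h.measurable_innovations (.inl u)
  simp only [h.eq_thin u hu, Nat.cast_add, add_mul]
  rw [lintegral_add_left (hLm.natCast_ennreal.fun_mul (hY.of_sigmaOn h.measurable_innovations)),
    ← hT]
  exact congrArg (· + _) hL

variable [IsProbabilityMeasure (ℙ : Measure Ω)]

theorem lintegral_innovation (h : IsMPMRFWith lam α pa r L I N) (hlam : 0 ≤ lam) (hα : α ≤ 1)
    {u : V} (hu : u ≠ r) :
    ∫⁻ ω, (L u ω : ℝ≥0∞) ∂ℙ = ENNReal.ofReal lam * ENNReal.ofReal (1 - α) := by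
  rw [(h.poisson u hu).lintegral (mul_nonneg hlam (sub_nonneg.2 hα)), ENNReal.ofReal_mul hlam]

theorem lintegral_eq (h : IsMPMRFWith lam α pa r L I N) (hpa : IsRootedAt pa r) (hlam : 0 ≤ lam)
    (hα : α ∈ Set.Icc (0 : ℝ) 1) (w : V) : ∫⁻ ω, (N w ω : ℝ≥0∞) ∂ℙ = ENNReal.ofReal lam := by
  induction w using hpa.induction with
  | root =>
    simp_rw [h.eq_root]
    exact h.poisson_root.lintegral hlam
  | step u hu ih =>
    have hrec := h.lintegral_mul_eq hpa hu subset_rfl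
      (fun j hj hju => hpa.not_isAncestor_apply hu (hju ▸ hj)) (Y := fun _ => 1) measurable_const
    simp only [mul_one, lintegral_const, measure_univ, ih, h.lintegral_innovation hlam hα.2 hu]
      at hrec
    rw [hrec]
    calc _ = ENNReal.ofReal lam * (ENNReal.ofReal α + ENNReal.ofReal (1 - α)) := by ring
      _ = _ := by rw [ENNReal.ofReal_add_ofReal_one_sub hα, mul_one]

theorem lintegral_innovation_mul_thin (h : IsMPMRFWith lam α pa r L I N) (hpa : IsRootedAt pa r)
    (hlam : 0 ≤ lam) (hα : α ∈ Set.Icc (0 : ℝ) 1) {u : V} (hu : u ≠ r) :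
    ∫⁻ ω, (L u ω : ℝ≥0∞)
        * (∑ i ∈ Finset.range (N (pa u) ω), innovations L I (.inr (u, i)) ω : ℕ) ∂ℙ
      = ENNReal.ofReal lam * ENNReal.ofReal (1 - α) * (ENNReal.ofReal α * ENNReal.ofReal lam) := by
  have hX := h.measurable_ancestorInnovations hpa (pa u)
  have hthin := h.indep.lintegral_thin_mul h.measurable_innovations (b := fun i => .inr (u, i))
    (h.lintegral_bernoulli u) (fun _ => hpa.not_isAncestor_apply hu) hX (Y := fun _ => 1)
    measurable_const
  simp only [mul_one, h.lintegral_eq hpa hlam hα] at hthin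
  have hcoord := h.indep.lintegral_coord_mul h.measurable_innovations (j := .inl u)
    (s := ancestorInnovations pa (pa u) ∪ Set.range fun i => .inr (u, i))
    (fun hj => hj.elim (hpa.not_isAncestor_apply hu) fun ⟨_, hi⟩ => Sum.inr_ne_inl hi)
    (Measurable.sum_range (hX.mono (sigmaOn_mono Set.subset_union_left) le_rfl)
      fun i => measurable_sigmaOn (Set.mem_union_right _ (Set.mem_range_self i))).natCast_ennreal
  rw [innovations_inl] at hcoord
  rw [hcoord, hthin, h.lintegral_innovation hlam hα.2 hu]

theorem lintegral_mul_self (h : IsMPMRFWith lam α pa r L I N) (hpa : IsRootedAt pa r)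
    (hlam : 0 ≤ lam) (hα : α ∈ Set.Icc (0 : ℝ) 1) (u : V) :
    ∫⁻ ω, (N u ω : ℝ≥0∞) * N u ω ∂ℙ = ENNReal.ofReal lam * (ENNReal.ofReal lam + 1) := by
  induction u using hpa.induction with
  | root =>
    simp_rw [h.eq_root]
    exact h.poisson_root.lintegral_mul_self hlam
  | step u hu ih =>
    set m := ENNReal.ofReal lam
    set p := ENNReal.ofReal α
    set q := ENNReal.ofReal (1 - α)
    set T : Ω → ℕ := fun ω => ∑ i ∈ Finset.range (N (pa u) ω), innovations L I (.inr (u, i)) ω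
    have hTT := h.indep.lintegral_thin_mul_self h.measurable_innovations (b := fun i => .inr (u, i))
      (fun _ _ h => by simpa using h) (innovations_inr_le_one L I u) (h.lintegral_bernoulli u)
      (fun _ => hpa.not_isAncestor_apply hu) (h.measurable_ancestorInnovations hpa (pa u))
    have hLm : Measurable (L u) := h.measurable_innovations (.inl u)
    have hTm : Measurable T :=
      (h.measurable_apply hpa (pa u)).sum_range fun i => h.measurable_innovations (.inr (u, i))
    calc ∫⁻ ω, (N u ω : ℝ≥0∞) * N u ω ∂ℙ
        = ∫⁻ ω, (L u ω : ℝ≥0∞) * L u ω + 2 * ((L u ω : ℝ≥0∞) * T ω) + (T ω : ℝ≥0∞) * T ω ∂ℙ := by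
          simp only [h.eq_thin u hu, Nat.cast_add]
          exact lintegral_congr fun ω => by ring
      _ = m * q * (m * q + 1) + 2 * (m * q * (p * m)) + (p ^ 2 * (m * (m + 1)) + p * q * m) := by
          rw [lintegral_add_left (by fun_prop), lintegral_add_left (by fun_prop),
            lintegral_const_mul _ (by fun_prop), h.lintegral_innovation_mul_thin hpa hlam hα hu,
            hTT, ih, h.lintegral_eq hpa hlam hα,
            (h.poisson u hu).lintegral_mul_self (mul_nonneg hlam (sub_nonneg.2 hα.2)),
            ENNReal.ofReal_mul hlam, ← ENNReal.ofReal_add_ofReal_one_sub hα,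
            ENNReal.add_sub_cancel_left ENNReal.ofReal_ne_top]
      _ = m * (m * (p + q) ^ 2 + (p * (p + q) + q)) := by ring
      _ = m * (m + 1) := by
          rw [ENNReal.ofReal_add_ofReal_one_sub hα, one_pow, mul_one, mul_one,
            ENNReal.ofReal_add_ofReal_one_sub hα]

variable {G : SimpleGraph V}

theorem lintegral_mul_of_not_isAncestor (h : IsMPMRFWith lam α pa r L I N) (hG : G.IsTree)
    (hpa : IsParentMap G r pa) (hlam : 0 ≤ lam) (hα : α ∈ Set.Icc (0 : ℝ) 1) {u w : V}
    (huw : ¬ IsAncestor pa u w)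
    (ih : ∫⁻ ω, (N (pa u) ω : ℝ≥0∞) * N w ω ∂ℙ
      = ENNReal.ofReal lam ^ 2 + ENNReal.ofReal lam * ENNReal.ofReal α ^ G.dist (pa u) w) :
    ∫⁻ ω, (N u ω : ℝ≥0∞) * N w ω ∂ℙ
      = ENNReal.ofReal lam ^ 2 + ENNReal.ofReal lam * ENNReal.ofReal α ^ G.dist u w := by
  have hu : u ≠ r := fun hu => huw (hu ▸ hpa.isRootedAt.isAncestor_root w)
  have hs : ∀ j ∈ ancestorInnovations pa (pa u) ∪ ancestorInnovations pa w,
      Sum.elim id Prod.fst j ≠ u := by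
    rintro j (hj | hj) hju
    · exact hpa.isRootedAt.not_isAncestor_apply hu (hju ▸ hj)
    · exact huw (hju ▸ hj)
  rw [h.lintegral_mul_eq hpa.isRootedAt hu Set.subset_union_left hs
      (((h.measurable_ancestorInnovations hpa.isRootedAt w).mono
        (sigmaOn_mono Set.subset_union_right) le_rfl).natCast_ennreal),
    ih, h.lintegral_eq hpa.isRootedAt hlam hα, h.lintegral_innovation hlam hα.2 hu,
    hpa.dist_eq_dist_apply_add_one hG huw]
  calc _ = ENNReal.ofReal lam ^ 2 * (ENNReal.ofReal α + ENNReal.ofReal (1 - α))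
        + ENNReal.ofReal lam * ENNReal.ofReal α ^ (G.dist (pa u) w + 1) := by ring
    _ = _ := by rw [ENNReal.ofReal_add_ofReal_one_sub hα, mul_one]

theorem lintegral_mul_of_isAncestor (h : IsMPMRFWith lam α pa r L I N) (hG : G.IsTree)
    (hpa : IsParentMap G r pa) (hlam : 0 ≤ lam) (hα : α ∈ Set.Icc (0 : ℝ) 1) {u w : V}
    (huw : IsAncestor pa u w) :
    ∫⁻ ω, (N u ω : ℝ≥0∞) * N w ω ∂ℙ
      = ENNReal.ofReal lam ^ 2 + ENNReal.ofReal lam * ENNReal.ofReal α ^ G.dist u w := by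
  have hdiag : ∀ u, ∫⁻ ω, (N u ω : ℝ≥0∞) * N u ω ∂ℙ
      = ENNReal.ofReal lam ^ 2 + ENNReal.ofReal lam * ENNReal.ofReal α ^ G.dist u u := fun u => by
    rw [h.lintegral_mul_self hpa.isRootedAt hlam hα, SimpleGraph.dist_self]
    ring
  induction w using hpa.isRootedAt.induction generalizing u with
  | root => exact hpa.isRootedAt.eq_of_isAncestor_root huw ▸ hdiag r
  | step w hw ih =>
    by_cases hne : u = w
    · exact hne ▸ hdiag u
    have hwu : ¬ IsAncestor pa w u := fun hwu => hne (hpa.isRootedAt.isAncestor_antisymm huw hwu)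
    have hsymm := ih (huw.apply_of_ne hne)
    rw [lintegral_congr fun ω => mul_comm _ _, SimpleGraph.dist_comm] at hsymm ⊢
    exact h.lintegral_mul_of_not_isAncestor hG hpa hlam hα hwu hsymm

theorem lintegral_mul (h : IsMPMRFWith lam α pa r L I N) (hG : G.IsTree)
    (hpa : IsParentMap G r pa) (hlam : 0 ≤ lam) (hα : α ∈ Set.Icc (0 : ℝ) 1) (u w : V) :
    ∫⁻ ω, (N u ω : ℝ≥0∞) * N w ω ∂ℙ
      = ENNReal.ofReal lam ^ 2 + ENNReal.ofReal lam * ENNReal.ofReal α ^ G.dist u w := by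
  induction u using hpa.isRootedAt.induction with
  | root => exact h.lintegral_mul_of_isAncestor hG hpa hlam hα (hpa.isRootedAt.isAncestor_root w)
  | step u hu ih =>
    by_cases huw : IsAncestor pa u w
    · exact h.lintegral_mul_of_isAncestor hG hpa hlam hα huw
    · exact h.lintegral_mul_of_not_isAncestor hG hpa hlam hα huw ih

theorem integral_eq (h : IsMPMRFWith lam α pa r L I N) (hpa : IsRootedAt pa r) (hlam : 0 ≤ lam)
    (hα : α ∈ Set.Icc (0 : ℝ) 1) (w : V) : ∫ ω, (N w ω : ℝ) ∂ℙ = lam :=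
  integral_natCast_eq_of_lintegral (h.measurable_apply hpa w) hlam (h.lintegral_eq hpa hlam hα w)

theorem integral_sum [Fintype V] (h : IsMPMRFWith lam α pa r L I N) (hpa : IsRootedAt pa r)
    (hlam : 0 ≤ lam) (hα : α ∈ Set.Icc (0 : ℝ) 1) :
    ∫ ω, ((∑ j, N j ω : ℕ) : ℝ) ∂ℙ = ∑ _j : V, lam := by
  refine integral_natCast_eq_of_lintegral
    (Finset.measurable_sum _ fun j _ => h.measurable_apply hpa j)
    (Finset.sum_nonneg fun _ _ => hlam) ?_
  push_cast
  rw [lintegral_finsetSum _ fun j _ => (h.measurable_apply hpa j).natCast_ennreal,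
    ENNReal.ofReal_sum_of_nonneg fun _ _ => hlam]
  exact Finset.sum_congr rfl fun j _ => h.lintegral_eq hpa hlam hα j

theorem integral_mul_sum [Fintype V] (h : IsMPMRFWith lam α pa r L I N) (hG : G.IsTree)
    (hpa : IsParentMap G r pa) (hlam : 0 ≤ lam) (hα : α ∈ Set.Icc (0 : ℝ) 1) (v : V) :
    ∫ ω, (N v ω : ℝ) * ((∑ j, N j ω : ℕ) : ℝ) ∂ℙ = ∑ j, (lam ^ 2 + lam * α ^ G.dist v j) := by
  have hNm := h.measurable_apply hpa.isRootedAt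
  have hterm : ∀ j, 0 ≤ lam * α ^ G.dist v j := fun j => mul_nonneg hlam (pow_nonneg hα.1 _)
  simp_rw [← Nat.cast_mul]
  refine integral_natCast_eq_of_lintegral
    ((hNm v).fun_mul (Finset.measurable_sum _ fun j _ => hNm j))
    (Finset.sum_nonneg fun j _ => add_nonneg (sq_nonneg lam) (hterm j)) ?_
  push_cast
  simp only [Finset.mul_sum]
  rw [lintegral_finsetSum _ fun j _ => (hNm v).natCast_ennreal.fun_mul (hNm j).natCast_ennreal,
    ENNReal.ofReal_sum_of_nonneg fun j _ => add_nonneg (sq_nonneg lam) (hterm j)]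
  refine Finset.sum_congr rfl fun j _ => ?_
  rw [h.lintegral_mul hG hpa hlam hα v j, ENNReal.ofReal_add (sq_nonneg lam) (hterm j),
    ENNReal.ofReal_mul hlam, ENNReal.ofReal_pow hlam, ENNReal.ofReal_pow hα.1]

end IsMPMRFWith

end Model

theorem cov_aggregate_eq_closeness_general
    {V Ω : Type*} [Fintype V] [DecidableEq V]
    [MeasureSpace Ω] [IsProbabilityMeasure (ℙ : Measure Ω)]
    (G : SimpleGraph V) (hG : G.IsTree)
    (r : V) (pa : V → V) (hpa : IsParentMap G r pa)
    (lam : ℝ) (hlam : 0 < lam)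
    (α : ℝ) (hα : α ∈ Set.Ioo (0 : ℝ) 1)
    (N : V → Ω → ℕ) (hN : IsMPMRF lam (fun _ _ => α) pa r N)
    (v : V) :
    cov (fun ω => (N v ω : ℝ)) (fun ω => ((∑ j, N j ω : ℕ) : ℝ))
      = lam * ∑ j : V, α ^ (G.dist v j) := by
  obtain ⟨L, I, h⟩ := hN.exists_isMPMRFWith
  have hα' : α ∈ Set.Icc (0 : ℝ) 1 := Set.Ioo_subset_Icc_self hα
  rw [cov, h.integral_mul_sum hG hpa hlam.le hα' v, h.integral_eq hpa.isRootedAt hlam.le hα' v,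
    h.integral_sum hpa.isRootedAt hlam.le hα']
  simp only [Finset.sum_add_distrib, Finset.sum_const, Finset.mul_sum]
  ring

/-- `Cov(N_v, M) = λ · ∑_{j∈V} α^{dist(v,j)}`, an exponentially
transformed closeness index. -/
theorem cov_aggregate_eq_closeness
    {V Ω : Type*} [Fintype V] [DecidableEq V]
    [MeasureSpace Ω] [IsProbabilityMeasure (ℙ : Measure Ω)]
    (d : ℕ) (hd : Fintype.card V = d)
    (G : SimpleGraph V) (hG : G.IsTree)
    (r : V) (pa : V → V) (hpa : IsParentMap G r pa)
    (lam : ℝ) (hlam : 0 < lam)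
    (α : ℝ) (hα : α ∈ Set.Ioo (0 : ℝ) 1)
    (N : V → Ω → ℕ) (hN : IsMPMRF lam (fun _ _ => α) pa r N)
    (v : V) :
    cov (fun ω => (N v ω : ℝ)) (fun ω => ((∑ j, N j ω : ℕ) : ℝ))
      = lam * ∑ j : V, α ^ (G.dist v j) :=
  cov_aggregate_eq_closeness_general G hG r pa hpa lam hlam α hα N hN v

end
end
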